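/- arXiv:1808.04990 — 13 statements merged into one kernel-verified Lean document; each statement's English description precedes it below -/
import Mathlib

section
/- Let X be a real Hilbert space and F : X → X* strongly monotone with constant ν > 0. Suppose that for each u ∈ X, a(u;·,·) is a bilinear form on X satisfying the uniform coercivity bound a(u;v,v) ≥ α‖v‖_X² and the uniform boundedness bound a(u;v,w) ≤ β‖v‖_X‖w‖_X (with constants α, β > 0 independent of u), and define f(u) ∈ X* by ⟨f(u),w⟩ = a(u;u,w) − ⟨F(u),w⟩. Assume that for every v ∈ X the maps u ↦ a(u;u,v) and u ↦ ⟨f(u),v⟩ are continuous from X (with its norm topology) to ℝ. If a sequence {uⁿ}ₙ₌₀^∞ ⊆ X satisfies the iterative linearization relation a(uⁿ; uⁿ⁺¹, w) = ⟨f(uⁿ), w⟩ for all w ∈ X and all n ≥ 0, and ‖uⁿ⁺¹ − uⁿ‖_X → 0 as n → ∞, then {uⁿ} converges in norm to an element u* ∈ X which is the unique solution of ⟨F(u*), v⟩ = 0 for all v ∈ X. -/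
/-- Convergence of the general iterative linearization scheme for a strongly
monotone operator `F` on a real Hilbert space `X`. -/
theorem iterative_linearization_convergence
    {X : Type*} [NormedAddCommGroup X] [InnerProductSpace ℝ X] [CompleteSpace X]
    (F : X → X →L[ℝ] ℝ) (a : X → X →ₗ[ℝ] X →ₗ[ℝ] ℝ)
    (ν α β : ℝ) (hν : 0 < ν) (hα : 0 < α) (hβ : 0 < β)
    (hmono : ∀ u v : X, ν * ‖u - v‖ ^ 2 ≤ F u (u - v) - F v (u - v))
    (hcoer : ∀ u v : X, α * ‖v‖ ^ 2 ≤ a u v v)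
    (hbdd : ∀ u v w : X, a u v w ≤ β * ‖v‖ * ‖w‖)
    (hconta : ∀ v : X, Continuous fun u => a u u v)
    (hcontf : ∀ v : X, Continuous fun u => a u u v - F u v)
    (u : ℕ → X)
    (hiter : ∀ n : ℕ, ∀ w : X, a (u n) (u (n + 1)) w = a (u n) (u n) w - F (u n) w)
    (hnull : Filter.Tendsto (fun n => ‖u (n + 1) - u n‖) Filter.atTop (nhds 0)) :
    ∃ ustar : X, Filter.Tendsto u Filter.atTop (nhds ustar) ∧
      (∀ v : X, F ustar v = 0) ∧
      (∀ w : X, (∀ v : X, F w v = 0) → w = ustar) := by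
  set e : ℕ → ℝ := fun n => ‖u (n + 1) - u n‖ with he
  -- F (u n) w = a (u n) (u n - u (n+1)) w
  have hFeq : ∀ n w, F (u n) w = a (u n) (u n - u (n + 1)) w := by
    intro n w
    have := hiter n w
    simp [map_sub, LinearMap.sub_apply]
    linarith
  have hFle : ∀ n w, F (u n) w ≤ β * e n * ‖w‖ := by
    intro n w
    rw [hFeq]
    have := hbdd (u n) (u n - u (n + 1)) w
    rw [norm_sub_rev] at this
    exact this
  have hFabs : ∀ n w, |F (u n) w| ≤ β * e n * ‖w‖ := by
    intro n w
    rw [abs_le]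
    refine ⟨?_, hFle n w⟩
    have := hFle n (-w)
    rw [map_neg, norm_neg] at this
    linarith
  have hen : ∀ n, 0 ≤ e n := fun n => norm_nonneg _
  -- distance bound
  have hdist : ∀ m n, ‖u n - u m‖ ≤ β / ν * (e n + e m) := by
    intro m n
    set d := ‖u n - u m‖ with hd
    have hd0 : 0 ≤ d := norm_nonneg _
    have h1 : ν * d ^ 2 ≤ F (u n) (u n - u m) - F (u m) (u n - u m) := hmono (u n) (u m)
    have h2 : F (u n) (u n - u m) ≤ β * e n * d := hFle n _
    have h3 : -F (u m) (u n - u m) ≤ β * e m * d := by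
      have := hFabs m (u n - u m)
      have := neg_abs_le (F (u m) (u n - u m))
      linarith
    have h4 : ν * d ^ 2 ≤ β * (e n + e m) * d := by nlinarith
    rcases eq_or_lt_of_le hd0 with h | h
    · rw [← h]
      positivity
    · rw [div_mul_eq_mul_div, le_div_iff₀ hν]
      nlinarith
  have hcauchy : CauchySeq u := by
    rw [Metric.cauchySeq_iff]
    intro ε hε
    have hkey : Filter.Tendsto (fun n => β / ν * (e n + e n)) Filter.atTop (nhds 0) := by
      have := (hnull.add hnull).const_mul (β / ν)
      simpa using this
    have : ∀ᶠ n in Filter.atTop, β / ν * (e n + e n) < ε / 2 := by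
      have := hkey.eventually (eventually_lt_nhds (by positivity : (0:ℝ) < ε / 2))
      simpa using this
    obtain ⟨N, hN⟩ := Filter.eventually_atTop.mp this
    refine ⟨N, fun m hm n hn => ?_⟩
    have h1 := hdist n m
    have h2 : β / ν * (e m + e n) ≤ β / ν * (e m + e m) + β / ν * (e n + e n) := by
      have hb : 0 ≤ β / ν := by positivity
      nlinarith [hen m, hen n]
    have := hN m hm
    have := hN n hn
    rw [dist_eq_norm]
    linarith
  obtain ⟨ustar, hlim⟩ := cauchySeq_tendsto_of_complete hcauchy
  have hFcont : ∀ v : X, Continuous fun x => F x v := by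
    intro v
    have : (fun x => F x v) = (fun x => a x x v) - fun x => a x x v - F x v := by
      funext x; simp
    rw [this]
    exact (hconta v).sub (hcontf v)
  have hFzero : ∀ v : X, F ustar v = 0 := by
    intro v
    have h1 : Filter.Tendsto (fun n => F (u n) v) Filter.atTop (nhds (F ustar v)) :=
      ((hFcont v).continuousAt.tendsto).comp hlim
    have h2 : Filter.Tendsto (fun n => F (u n) v) Filter.atTop (nhds 0) := by
      have htend : Filter.Tendsto (fun n => β * e n * ‖v‖) Filter.atTop (nhds 0) := by
        have := (hnull.const_mul β).mul_const ‖v‖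
        simpa [mul_assoc] using this
      exact squeeze_zero_norm (fun n => by rw [Real.norm_eq_abs]; exact hFabs n v) htend
    exact tendsto_nhds_unique h1 h2
  refine ⟨ustar, hlim, hFzero, fun w hw => ?_⟩
  have h1 : ν * ‖w - ustar‖ ^ 2 ≤ F w (w - ustar) - F ustar (w - ustar) := hmono w ustar
  rw [hw, hFzero] at h1
  have hx : ‖w - ustar‖ ^ 2 ≤ 0 := le_of_mul_le_mul_left (by linarith) hν
  have hx0 : ‖w - ustar‖ ^ 2 = 0 := le_antisymm hx (sq_nonneg _)
  have : ‖w - ustar‖ = 0 := by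
    have := pow_eq_zero_iff (n := 2) (by norm_num) |>.mp hx0
    exact this
  exact norm_sub_eq_zero_iff.mp this
end

section
/- Let X be a real Hilbert space and F : X → X* strongly monotone with constant ν > 0. Suppose that for each u ∈ X, a(u;·,·) is a bilinear form on X satisfying a(u;v,w) ≤ β‖v‖_X‖w‖_X for all v, w ∈ X with β > 0 independent of u, and define f(u) ∈ X* by ⟨f(u),w⟩ = a(u;u,w) − ⟨F(u),w⟩. If a sequence {uⁿ}ₙ₌₀^∞ ⊆ X satisfies a(uⁿ; uⁿ⁺¹, w) = ⟨f(uⁿ), w⟩ for all w ∈ X and n ≥ 0, then for all m ≥ n ≥ 0 one has ‖uᵐ − uⁿ‖_X ≤ (β/ν)(‖uᵐ⁺¹ − uᵐ‖_X + ‖uⁿ⁺¹ − uⁿ‖_X). -/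
/-- Cauchy-type estimate for the iterates of the general iterative
linearization scheme. -/
theorem iterative_linearization_cauchy_estimate
    {X : Type*} [NormedAddCommGroup X] [InnerProductSpace ℝ X] [CompleteSpace X]
    (F : X → X →L[ℝ] ℝ) (a : X → X →ₗ[ℝ] X →ₗ[ℝ] ℝ)
    (ν β : ℝ) (hν : 0 < ν) (hβ : 0 < β)
    (hmono : ∀ u v : X, ν * ‖u - v‖ ^ 2 ≤ F u (u - v) - F v (u - v))
    (hbdd : ∀ u v w : X, a u v w ≤ β * ‖v‖ * ‖w‖)
    (u : ℕ → X)
    (hiter : ∀ n : ℕ, ∀ w : X, a (u n) (u (n + 1)) w = a (u n) (u n) w - F (u n) w) :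
    ∀ m n : ℕ, n ≤ m →
      ‖u m - u n‖ ≤ (β / ν) * (‖u (m + 1) - u m‖ + ‖u (n + 1) - u n‖) := by
  intro m n _
  obtain ⟨w, hw⟩ : ∃ w : X, w = u m - u n := ⟨_, rfl⟩
  rw [← hw]
  have hsub : ∀ k : ℕ, ∀ v v' : X, a (u k) (v - v') w = a (u k) v w - a (u k) v' w := by
    intro k v v'
    rw [map_sub, LinearMap.sub_apply]
  have hF : ∀ k : ℕ, F (u k) w = a (u k) (u k - u (k + 1)) w := by
    intro k
    have h := hiter k w
    rw [hsub]
    linarith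
  have h1 : a (u m) (u m - u (m + 1)) w ≤ β * ‖u (m + 1) - u m‖ * ‖w‖ := by
    have := hbdd (u m) (u m - u (m + 1)) w
    rwa [norm_sub_rev] at this
  have h2 : -(a (u n) (u n - u (n + 1)) w) ≤ β * ‖u (n + 1) - u n‖ * ‖w‖ := by
    have h := hbdd (u n) (u (n + 1) - u n) w
    rw [hsub] at h
    rw [hsub]
    linarith
  have hkey : ν * ‖w‖ ^ 2 ≤ β * (‖u (m + 1) - u m‖ + ‖u (n + 1) - u n‖) * ‖w‖ := by
    have hm := hmono (u m) (u n)
    rw [← hw, hF m, hF n] at hm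
    nlinarith
  rcases eq_or_lt_of_le (norm_nonneg w) with hz | hz
  · rw [← hz]
    positivity
  · have h3 : ν * ‖w‖ ≤ β * (‖u (m + 1) - u m‖ + ‖u (n + 1) - u n‖) := by
      rw [pow_two, ← mul_assoc] at hkey
      exact le_of_mul_le_mul_right hkey hz
    rw [div_mul_eq_mul_div, le_div_iff₀ hν]
    linarith
end

section
/- Let X be a real Hilbert space, g ∈ X*, and for each u ∈ X let a(u;·,·) be a bilinear form on X which is symmetric (a(u;v,w) = a(u;w,v)), uniformly coercive (a(u;v,v) ≥ α‖v‖_X² with α > 0 independent of u), and uniformly bounded (a(u;v,w) ≤ β‖v‖_X‖w‖_X with β > 0 independent of u). Define F : X → X* by ⟨F(u),v⟩ = a(u;u,v) − ⟨g,v⟩. Assume there is a functional G : X → ℝ such that (K1) for all u, v ∈ X the function t ↦ G(u + t v) is differentiable with derivative t ↦ a(u+tv; u+tv, v), the map u ↦ a(u;u,·) is continuous from X to X* (for each v ∈ X, u ↦ a(u;u,v) is continuous), and u ↦ a(u;u,·) is strongly monotone with some constant c₀ > 0; and (K2) G(u) − G(v) ≥ ½(a(u;u,u) − a(u;v,v))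 for all u, v ∈ X. If {uⁿ}ₙ₌₀^∞ ⊆ X is the Kačanov iteration, i.e. a(uⁿ; uⁿ⁺¹, v) = ⟨g, v⟩ for all v ∈ X and n ≥ 0, then {uⁿ} converges in norm to the unique element u* ∈ X satisfying ⟨F(u*), v⟩ = 0 for all v ∈ X. -/
/-!
Kačanov's method is a descent method for the energy `J u = G u - g u`, whose derivative is `F`.
By (K2) and coercivity, one step lowers `J` by at least `α/2 ‖uⁿ - uⁿ⁺¹‖²`; integrating the
Gâteaux derivative of `G` along rays shows `G` grows quadratically, so `J` is bounded below and
the increments `uⁿ - uⁿ⁺¹` tend to zero. They control the residual `F(uⁿ) = a(uⁿ; uⁿ - uⁿ⁺¹, ·)`,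
and strong monotonicity of `u ↦ a(u; u, ·)` turns small residuals into
`c₀ ‖uⁿ - uᵐ‖ ≤ β (‖uⁿ - uⁿ⁺¹‖ + ‖uᵐ - uᵐ⁺¹‖)`. Hence the iterates form a Cauchy sequence, and
continuity identifies the limit as the unique zero of `F`.
-/

open Filter Set Topology

theorem cauchySeq_of_dist_le_add {α ι : Type*} [PseudoMetricSpace α] [Nonempty ι]
    [SemilatticeSup ι] {x : ι → α} {r : ι → ℝ} (h : ∀ m n, dist (x m) (x n) ≤ r m + r n)
    (hr : Tendsto r atTop (𝓝 0)) : CauchySeq x := by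
  refine cauchySeq_iff_tendsto_dist_atTop_0.2 <|
    squeeze_zero (fun _ => dist_nonneg) (fun p => h p.1 p.2) ?_
  rw [← prod_atTop_atTop_eq]
  simpa using (hr.comp tendsto_fst).add (hr.comp tendsto_snd)

theorem tendsto_zero_of_add_le_of_bddBelow {J e : ℕ → ℝ} (he : ∀ n, 0 ≤ e n)
    (h : ∀ n, J (n + 1) + e n ≤ J n) (hJ : BddBelow (range J)) : Tendsto e atTop (𝓝 0) := by
  have hlim := tendsto_atTop_ciInf (antitone_nat_of_succ_le fun n => by linarith [h n, he n]) hJ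
  have hgap : Tendsto (fun n => J n - J (n + 1)) atTop (𝓝 0) := by
    simpa using hlim.sub (hlim.comp (tendsto_add_atTop_nat 1))
  exact squeeze_zero he (fun n => by linarith [h n]) hgap

theorem add_half_le_of_hasDerivAt {φ φ' : ℝ → ℝ} {c : ℝ} (hφ : ∀ t, HasDerivAt φ (φ' t) t)
    (hc : ∀ t ∈ Ioo (0 : ℝ) 1, c * t ≤ φ' t) : φ 0 + c / 2 ≤ φ 1 := by
  set ψ : ℝ → ℝ := fun t => φ t - c / 2 * t ^ 2
  have hψ : ∀ t, HasDerivAt ψ (φ' t - c * t) t := fun t =>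
    ((hφ t).sub ((hasDerivAt_pow 2 t).const_mul (c / 2))).congr_deriv (by push_cast; ring)
  have hmono : MonotoneOn ψ (Icc 0 1) :=
    monotoneOn_of_hasDerivWithinAt_nonneg (convex_Icc 0 1)
      (fun t _ => (hψ t).continuousAt.continuousWithinAt) (fun t _ => (hψ t).hasDerivWithinAt)
      (fun t ht => by rw [interior_Icc] at ht; linarith [hc t ht])
  have h01 := hmono (left_mem_Icc.2 zero_le_one) (right_mem_Icc.2 zero_le_one) zero_le_one
  simp only [ψ] at h01
  linarith

section StronglyMonotone

variable {X : Type*} [NormedAddCommGroup X] {c₀ : ℝ} {Φ : X → X → ℝ} {ℓ : X → ℝ} {u v : X}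

theorem norm_sub_le_of_abs_sub_le {ρ σ : ℝ} (hc₀ : 0 < c₀) (hρ : 0 ≤ ρ) (hσ : 0 ≤ σ)
    (hΦ : c₀ * ‖u - v‖ ^ 2 ≤ Φ u (u - v) - Φ v (u - v))
    (hu : |Φ u (u - v) - ℓ (u - v)| ≤ ρ * ‖u - v‖)
    (hv : |Φ v (u - v) - ℓ (u - v)| ≤ σ * ‖u - v‖) : ‖u - v‖ ≤ (ρ + σ) / c₀ := by
  rw [le_div_iff₀' hc₀]
  rcases (norm_nonneg (u - v)).eq_or_lt with h0 | hpos
  · rw [← h0, mul_zero]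
    positivity
  · have := abs_le.1 hu
    have := abs_le.1 hv
    refine le_of_mul_le_mul_right ?_ hpos
    nlinarith

theorem eq_of_apply_sub_eq (hc₀ : 0 < c₀)
    (hΦ : c₀ * ‖u - v‖ ^ 2 ≤ Φ u (u - v) - Φ v (u - v))
    (hu : Φ u (u - v) = ℓ (u - v)) (hv : Φ v (u - v) = ℓ (u - v)) : u = v := by
  rw [hu, hv, sub_self, ← mul_zero c₀] at hΦ
  simpa [sub_eq_zero] using le_of_mul_le_mul_left hΦ hc₀

end StronglyMonotone

section NormedSpace

variable {X : Type*} [NormedAddCommGroup X] [NormedSpace ℝ X]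

theorem abs_apply_le_of_forall_apply_le {β : ℝ} {B : X →ₗ[ℝ] X →ₗ[ℝ] ℝ}
    (hB : ∀ v w, B v w ≤ β * ‖v‖ * ‖w‖) (v w : X) : |B v w| ≤ β * ‖v‖ * ‖w‖ :=
  abs_le.2 ⟨neg_le.1 (by simpa using hB (-v) w), hB v w⟩

theorem add_half_mul_norm_sq_le_of_hasDerivAt_smul {α : ℝ} {a : X → X →ₗ[ℝ] X →ₗ[ℝ] ℝ}
    {G : X → ℝ} {y : X}
    (hG : ∀ t : ℝ, HasDerivAt (fun s : ℝ => G (s • y)) (a (t • y) (t • y) y) t)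
    (hcoer : ∀ u, α * ‖y‖ ^ 2 ≤ a u y y) : G 0 + α * ‖y‖ ^ 2 / 2 ≤ G y := by
  simpa using add_half_le_of_hasDerivAt hG fun t ht => by
    rw [map_smul, LinearMap.smul_apply, smul_eq_mul, mul_comm]
    exact mul_le_mul_of_nonneg_left (hcoer _) ht.1.le

theorem bddBelow_range_sub_of_add_half_mul_norm_sq_le {α : ℝ} {G : X → ℝ} (g : X →L[ℝ] ℝ)
    (hα : 0 < α) (hG : ∀ y, G 0 + α * ‖y‖ ^ 2 / 2 ≤ G y) :
    BddBelow (range fun y => G y - g y) := by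
  refine ⟨G 0 - ‖g‖ ^ 2 / (2 * α), forall_mem_range.2 fun y => ?_⟩
  have hgy : g y ≤ ‖g‖ * ‖y‖ := (le_abs_self _).trans (g.le_opNorm y)
  have hquad : ‖g‖ * ‖y‖ - α / 2 * ‖y‖ ^ 2 ≤ ‖g‖ ^ 2 / (2 * α) := by
    rw [le_div_iff₀ (by positivity)]
    nlinarith [sq_nonneg (α * ‖y‖ - ‖g‖)]
  linarith [hG y]

/-- `v` is the Kačanov update of `u`: it solves the problem `a(u; v, ·) = g` linearized at `u`. -/
def IsKacanovStep (a : X → X →ₗ[ℝ] X →ₗ[ℝ] ℝ) (g : X →L[ℝ] ℝ) (u v : X) : Prop :=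
  ∀ w, a u v w = g w

namespace IsKacanovStep

variable {a : X → X →ₗ[ℝ] X →ₗ[ℝ] ℝ} {g : X →L[ℝ] ℝ} {u v : X}

theorem sub_apply_eq (h : IsKacanovStep a g u v) (w : X) :
    a u u w - g w = a u (u - v) w := by
  rw [← h w, map_sub, LinearMap.sub_apply]

theorem abs_sub_apply_le {β : ℝ} (h : IsKacanovStep a g u v)
    (hbdd : ∀ v w, a u v w ≤ β * ‖v‖ * ‖w‖) (w : X) :
    |a u u w - g w| ≤ β * ‖u - v‖ * ‖w‖ := by
  rw [h.sub_apply_eq]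
  exact abs_apply_le_of_forall_apply_le hbdd _ _

theorem energy_add_le {α : ℝ} {G : X → ℝ} (h : IsKacanovStep a g u v)
    (hsymm : ∀ v w, a u v w = a u w v) (hcoer : ∀ w, α * ‖w‖ ^ 2 ≤ a u w w)
    (hK2 : G u - G v ≥ (a u u u - a u v v) / 2) :
    G v - g v + α / 2 * ‖u - v‖ ^ 2 ≤ G u - g u := by
  have hg : g u - g v = a u v u - a u v v := by rw [← map_sub, ← h, map_sub]
  have hexpand : a u (u - v) (u - v) = a u u u - 2 * a u v u + a u v v := by
    simp only [map_sub, LinearMap.sub_apply, hsymm u v]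
    ring
  linarith [hcoer (u - v)]

end IsKacanovStep

theorem tendsto_norm_sub_succ_of_isKacanovStep {α : ℝ} {a : X → X →ₗ[ℝ] X →ₗ[ℝ] ℝ}
    {g : X →L[ℝ] ℝ} {G : X → ℝ} {u : ℕ → X} (hα : 0 < α)
    (hsymm : ∀ u v w : X, a u v w = a u w v) (hcoer : ∀ u v : X, α * ‖v‖ ^ 2 ≤ a u v v)
    (hK2 : ∀ u v : X, G u - G v ≥ (a u u u - a u v v) / 2)
    (hG : ∀ y, G 0 + α * ‖y‖ ^ 2 / 2 ≤ G y)
    (hstep : ∀ n, IsKacanovStep a g (u n) (u (n + 1))) :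
    Tendsto (fun n => ‖u n - u (n + 1)‖) atTop (𝓝 0) := by
  have hsq : Tendsto (fun n => α / 2 * ‖u n - u (n + 1)‖ ^ 2) atTop (𝓝 0) :=
    tendsto_zero_of_add_le_of_bddBelow (J := fun n => G (u n) - g (u n))
      (fun n => by positivity)
      (fun n => (hstep n).energy_add_le (hsymm _) (hcoer _) (hK2 _ _))
      ((bddBelow_range_sub_of_add_half_mul_norm_sq_le g hα hG).mono
        (range_comp_subset_range u fun y => G y - g y))
  convert (hsq.const_mul (2 / α)).sqrt using 1
  · ext n
    rw [← mul_assoc, div_mul_div_cancel₀ hα.ne', div_self two_ne_zero, one_mul,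
      Real.sqrt_sq (norm_nonneg _)]
  · simp

end NormedSpace

/-- Convergence of the Kačanov iteration. -/
theorem kacanov_convergence
    {X : Type*} [NormedAddCommGroup X] [InnerProductSpace ℝ X] [CompleteSpace X]
    (g : X →L[ℝ] ℝ) (a : X → X →ₗ[ℝ] X →ₗ[ℝ] ℝ)
    (α β : ℝ) (hα : 0 < α) (hβ : 0 < β)
    (hsymm : ∀ u v w : X, a u v w = a u w v)
    (hcoer : ∀ u v : X, α * ‖v‖ ^ 2 ≤ a u v v)
    (hbdd : ∀ u v w : X, a u v w ≤ β * ‖v‖ * ‖w‖)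
    (F : X → X →L[ℝ] ℝ) (hF : ∀ u v : X, F u v = a u u v - g v)
    (G : X → ℝ)
    -- (K1): G'(u) = a(u;u,·) in the Gâteaux sense
    (hG' : ∀ u v : X, ∀ t : ℝ,
      HasDerivAt (fun s : ℝ => G (u + s • v)) (a (u + t • v) (u + t • v) v) t)
    (hcont : ∀ v : X, Continuous fun u => a u u v)
    (c₀ : ℝ) (hc₀ : 0 < c₀)
    (hGmono : ∀ u v : X,
      c₀ * ‖u - v‖ ^ 2 ≤ a u u (u - v) - a v v (u - v))
    -- (K2)
    (hK2 : ∀ u v : X, G u - G v ≥ (a u u u - a u v v) / 2)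
    (u : ℕ → X)
    (hiter : ∀ n : ℕ, ∀ v : X, a (u n) (u (n + 1)) v = g v) :
    ∃ ustar : X, Filter.Tendsto u Filter.atTop (nhds ustar) ∧
      (∀ v : X, F ustar v = 0) ∧
      (∀ w : X, (∀ v : X, F w v = 0) → w = ustar) := by
  have hstep : ∀ n, IsKacanovStep a g (u n) (u (n + 1)) := hiter
  have hres n v : |a (u n) (u n) v - g v| ≤ β * ‖u n - u (n + 1)‖ * ‖v‖ :=
    (hstep n).abs_sub_apply_le (hbdd _) v
  have hd : Tendsto (fun n => ‖u n - u (n + 1)‖) atTop (𝓝 0) :=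
    tendsto_norm_sub_succ_of_isKacanovStep hα hsymm hcoer hK2
      (fun y => add_half_mul_norm_sq_le_of_hasDerivAt_smul (by simpa using hG' 0 y) (hcoer · y))
      hstep
  have hcauchy : CauchySeq u := by
    refine cauchySeq_of_dist_le_add (r := fun n => β * ‖u n - u (n + 1)‖ / c₀) (fun m n => ?_)
      (by simpa using (hd.const_mul β).div_const c₀)
    rw [dist_eq_norm, ← add_div]
    exact norm_sub_le_of_abs_sub_le (Φ := fun u v => a u u v) (ℓ := g) hc₀ (by positivity)
      (by positivity) (hGmono _ _) (hres m _) (hres n _)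
  obtain ⟨ustar, hlim⟩ := cauchySeq_tendsto_of_complete hcauchy
  have hsol (v : X) : a ustar ustar v = g v := by
    refine tendsto_nhds_unique (((hcont v).tendsto ustar).comp hlim) ?_
    rw [← tendsto_sub_const_iff (g v), sub_self]
    refine squeeze_zero_norm (fun n => (hres n v).trans_eq' (Real.norm_eq_abs _)) ?_
    simpa using (hd.const_mul β).mul_const ‖v‖
  refine ⟨ustar, hlim, fun v => by rw [hF, hsol, sub_self], fun w hw => ?_⟩
  exact eq_of_apply_sub_eq (Φ := fun u v => a u u v) (ℓ := g) hc₀ (hGmono w ustar)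
    (by rw [← sub_eq_zero, ← hF, hw]) (hsol _)
end

section
/- Let X be a real Hilbert space, g ∈ X*, and for each u ∈ X let a(u;·,·) be a bilinear form on X that is symmetric (a(u;v,w) = a(u;w,v)) and coercive with a(u;v,v) ≥ α‖v‖_X² for a constant α > 0 independent of u. Let G : X → ℝ satisfy G(u) − G(v) ≥ ½(a(u;u,u) − a(u;v,v)) for all u, v ∈ X, and define H : X → ℝ by H(u) = G(u) − ⟨g,u⟩. If {uⁿ}ₙ₌₀^∞ ⊆ X satisfies the Kačanov iteration a(uⁿ; uⁿ⁺¹, v) = ⟨g, v⟩ for all v ∈ X and n ≥ 0, then H(uⁿ) − H(uⁿ⁺¹) ≥ (α/2)‖uⁿ⁺¹ − uⁿ‖_X² for every n ≥ 0; in particular, the sequence {H(uⁿ)} is monotone decreasing. -/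
/-- Energy decay of the Kačanov iteration: the potential `H(u) = G(u) - ⟨g,u⟩`
decreases by at least `(α/2)‖uⁿ⁺¹ - uⁿ‖²` in each step; in particular the
sequence `H(uⁿ)` is monotone decreasing. -/
theorem kacanov_energy_decay
    {X : Type*} [NormedAddCommGroup X] [InnerProductSpace ℝ X] [CompleteSpace X]
    (g : X →L[ℝ] ℝ) (a : X → X →ₗ[ℝ] X →ₗ[ℝ] ℝ)
    (α : ℝ) (hα : 0 < α)
    (hsymm : ∀ u v w : X, a u v w = a u w v)
    (hcoer : ∀ u v : X, α * ‖v‖ ^ 2 ≤ a u v v)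
    (G : X → ℝ)
    (hK2 : ∀ u v : X, G u - G v ≥ (a u u u - a u v v) / 2)
    (H : X → ℝ) (hH : ∀ u : X, H u = G u - g u)
    (u : ℕ → X)
    (hiter : ∀ n : ℕ, ∀ v : X, a (u n) (u (n + 1)) v = g v) :
    (∀ n : ℕ, H (u n) - H (u (n + 1)) ≥ (α / 2) * ‖u (n + 1) - u n‖ ^ 2) ∧
    (∀ n : ℕ, H (u (n + 1)) ≤ H (u n)) := by
  have key : ∀ n : ℕ, H (u n) - H (u (n + 1)) ≥ (α / 2) * ‖u (n + 1) - u n‖ ^ 2 := by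
    intro n
    set x := u n with hx
    set y := u (n + 1) with hy
    have hb : a x (x - y) (x - y) = a x x x - 2 * (a x y x) + a x y y := by
      have h1 : a x x y = a x y x := by rw [hsymm x x y, hsymm x y x]
      simp [map_sub, LinearMap.sub_apply]
      rw [hsymm x x y]
      ring
    have hco := hcoer x (x - y)
    have hk := hK2 x y
    have hg1 : g x = a x y x := (hiter n x).symm
    have hg2 : g y = a x y y := (hiter n y).symm
    have hn : ‖y - x‖ = ‖x - y‖ := norm_sub_rev _ _
    rw [hH, hH, hg1, hg2, hn]
    nlinarith [hco, hk, hb]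
  refine ⟨key, fun n => ?_⟩
  have h := key n
  nlinarith [sq_nonneg ‖u (n + 1) - u n‖, hα.le]
end

section
/- Let X be a real Hilbert space and F : X → X* Lipschitz continuous with constant L_F > 0 and strongly monotone with constant ν > 0. Assume: (N1) for each u ∈ X there is a linear map F'(u) : X → X* which is the Gâteaux derivative of F at u (for all u, v, w ∈ X the function t ↦ ⟨F(u+tv), w⟩ is differentiable with derivative at t = 0 equal to ⟨F'(u)v, w⟩), with ⟨F'(u)v, w⟩ = ⟨F'(u)w, v⟩, ⟨F'(u)v, v⟩ ≥ α_{F'}‖v‖_X², and ⟨F'(u)v, w⟩ ≤ β_{F'}‖v‖_X‖w‖_X for all u, v, w ∈ X, with constants α_{F'}, β_{F'} > 0 independent of u; (N2) there is a functional G : X → ℝ whose Gâteaux derivative is G'(u) = F'(u)u, and u ↦ F'(u)u is continuous from X to X* with respect to the weak topology on X* (for each w ∈ X, u ↦ ⟨F'(u)u, w⟩ is continuous); (N3) there is a functional H : X → ℝ whose Gâteaux derivative is H' = F; (N4) δ : X → [δ_min, δ_max] is a continuous functional with constants 0 < δ_min ≤ δ_max < 2α_{F'}/L_F. If {uⁿ}ₙ₌₀^∞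 ⊆ X is the damped Newton iteration, i.e. ⟨F'(uⁿ)uⁿ⁺¹, v⟩ = ⟨F'(uⁿ)uⁿ, v⟩ − δ(uⁿ)⟨F(uⁿ), v⟩ for all v ∈ X and n ≥ 0, then {uⁿ} converges in norm to the unique element u* ∈ X satisfying ⟨F(u*), v⟩ = 0 for all v ∈ X. -/
/-!
The potential `H` of `F` satisfies the descent inequality
`H (x + s) ≤ H x + F x s + L/2 ‖s‖²` (Lipschitz continuity of `F`) and is bounded below (strong
monotonicity). A damped Newton step `s = uⁿ⁺¹ - uⁿ` solves `δ F(uⁿ) = -F'(uⁿ) s`, so coercivity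
of `F'` gives `F(uⁿ) s ≤ -(α/δ) ‖s‖²`, and `δ_max < 2α/L` turns this into a decrease of `H` by at
least `c ‖s‖²` with `c > 0`. Hence `∑ ‖uⁿ⁺¹ - uⁿ‖² < ∞`, and boundedness of `F'` gives
`‖F(uⁿ)‖ ≤ (β/δ_min) ‖uⁿ⁺¹ - uⁿ‖ → 0`. Finally, strong monotonicity makes `F` antilipschitz, so
`F` is a closed embedding of the complete space `X` into `X*`: the limit `0` of `F(uⁿ)` is
`F(u*)` for a unique `u*`, and `uⁿ → u*`.
-/

open Filter Set Topology

theorem image_sub_le_of_hasDerivAt_sub_le {φ φ' : ℝ → ℝ} {a : ℝ}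
    (hφ : ∀ t ∈ Icc (0 : ℝ) 1, HasDerivAt φ (φ' t) t)
    (hφ' : ∀ t ∈ Icc (0 : ℝ) 1, φ' t - φ' 0 ≤ a * t) :
    φ 1 - φ 0 ≤ φ' 0 + a / 2 := by
  set g : ℝ → ℝ := fun t => φ t - t * φ' 0 - a / 2 * t ^ 2
  have hg : ∀ t ∈ Icc (0 : ℝ) 1, HasDerivAt g (φ' t - φ' 0 - a * t) t := fun t ht => by
    refine (((hφ t ht).sub (hasDerivAt_mul_const (φ' 0))).sub
      ((hasDerivAt_pow 2 t).const_mul (a / 2))).congr_deriv ?_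
    ring
  have hanti : AntitoneOn g (Icc 0 1) := by
    refine antitoneOn_of_hasDerivWithinAt_nonpos (f' := fun t => φ' t - φ' 0 - a * t)
      (convex_Icc 0 1)
      (fun t ht => (hg t ht).continuousAt.continuousWithinAt) (fun t ht => ?_) (fun t ht => ?_)
    · exact (hg t (interior_subset ht)).hasDerivWithinAt
    · linarith [hφ' t (interior_subset ht)]
  have := hanti (left_mem_Icc.2 zero_le_one) (right_mem_Icc.2 zero_le_one) zero_le_one
  simp only [g] at this
  linarith

theorem le_image_sub_of_le_hasDerivAt_sub {φ φ' : ℝ → ℝ} {a : ℝ}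
    (hφ : ∀ t ∈ Icc (0 : ℝ) 1, HasDerivAt φ (φ' t) t)
    (hφ' : ∀ t ∈ Icc (0 : ℝ) 1, a * t ≤ φ' t - φ' 0) :
    φ' 0 + a / 2 ≤ φ 1 - φ 0 := by
  have := image_sub_le_of_hasDerivAt_sub_le (φ := -φ) (φ' := -φ') (a := -a)
    (fun t ht => (hφ t ht).neg) (fun t ht => by simp only [Pi.neg_apply]; linarith [hφ' t ht])
  simp only [Pi.neg_apply] at this
  linarith

section NewtonStep

variable {X : Type*} [NormedAddCommGroup X] [NormedSpace ℝ X] {A : X →L[ℝ] X →L[ℝ] ℝ}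
  {f : X →L[ℝ] ℝ} {s : X} {δ : ℝ}

theorem norm_apply_le_of_apply_apply_le {β : ℝ} (hβ : 0 ≤ β)
    (hA : ∀ v w : X, A v w ≤ β * ‖v‖ * ‖w‖) (v : X) : ‖A v‖ ≤ β * ‖v‖ :=
  (A v).opNorm_le_bound (by positivity) fun w => by
    have := hA (-v) w
    rw [map_neg, neg_apply, norm_neg] at this
    exact abs_le.2 ⟨by linarith, hA v w⟩

theorem norm_le_of_smul_eq_neg_apply {β : ℝ} (hδ : 0 < δ) (hβ : 0 ≤ β)
    (hA : ∀ v w : X, A v w ≤ β * ‖v‖ * ‖w‖) (hs : δ • f = -A s) : ‖f‖ ≤ β / δ * ‖s‖ := by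
  have := congrArg norm hs
  rw [norm_smul, norm_neg, Real.norm_of_nonneg hδ.le] at this
  rw [div_mul_eq_mul_div, le_div_iff₀' hδ, this]
  exact norm_apply_le_of_apply_apply_le hβ hA s

theorem apply_le_of_smul_eq_neg_apply {α : ℝ} (hδ : 0 < δ)
    (hA : ∀ v : X, α * ‖v‖ ^ 2 ≤ A v v) (hs : δ • f = -A s) : f s ≤ -(α / δ) * ‖s‖ ^ 2 := by
  have := congrArg (fun g : X →L[ℝ] ℝ => g s) hs
  simp only [smul_apply, neg_apply, smul_eq_mul] at this
  rw [neg_mul, div_mul_eq_mul_div, le_neg, div_le_iff₀' hδ]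
  linarith [hA s]

end NewtonStep

section PotentialOperator

variable {X : Type*} [NormedAddCommGroup X] [NormedSpace ℝ X] {F : X → X →L[ℝ] ℝ} {H : X → ℝ}

theorem potential_add_le {L : ℝ}
    (hH : ∀ u v : X, ∀ t : ℝ, HasDerivAt (fun s : ℝ => H (u + s • v)) (F (u + t • v) v) t)
    (hlip : ∀ u v w : X, |F u w - F v w| ≤ L * ‖u - v‖ * ‖w‖) (u v : X) :
    H (u + v) ≤ H u + F u v + L / 2 * ‖v‖ ^ 2 := by
  have := image_sub_le_of_hasDerivAt_sub_le (a := L * ‖v‖ ^ 2) (fun t _ => hH u v t) fun t ht => by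
    have h := (abs_le.1 (hlip (u + t • v) u v)).2
    rw [add_sub_cancel_left, norm_smul, Real.norm_of_nonneg ht.1] at h
    simp only [zero_smul, add_zero]
    linarith
  simp only [one_smul, zero_smul, add_zero] at this
  linarith

theorem add_le_potential_add {ν : ℝ}
    (hH : ∀ u v : X, ∀ t : ℝ, HasDerivAt (fun s : ℝ => H (u + s • v)) (F (u + t • v) v) t)
    (hmono : ∀ u v : X, ν * ‖u - v‖ ^ 2 ≤ F u (u - v) - F v (u - v)) (u v : X) :
    H u + F u v + ν / 2 * ‖v‖ ^ 2 ≤ H (u + v) := by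
  have := le_image_sub_of_le_hasDerivAt_sub (a := ν * ‖v‖ ^ 2) (fun t _ => hH u v t) fun t ht => by
    simp only [zero_smul, add_zero]
    rcases ht.1.eq_or_lt with rfl | ht₀
    · simp
    have h := hmono (u + t • v) u
    rw [add_sub_cancel_left, norm_smul, Real.norm_of_nonneg ht.1, map_smul, map_smul,
      smul_eq_mul, smul_eq_mul] at h
    nlinarith
  simp only [one_smul, zero_smul, add_zero] at this
  linarith

theorem bddBelow_range_potential {ν : ℝ} (hν : 0 < ν)
    (hH : ∀ u v : X, ∀ t : ℝ, HasDerivAt (fun s : ℝ => H (u + s • v)) (F (u + t • v) v) t)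
    (hmono : ∀ u v : X, ν * ‖u - v‖ ^ 2 ≤ F u (u - v) - F v (u - v)) :
    BddBelow (range H) := by
  refine ⟨H 0 - ‖F 0‖ ^ 2 / (2 * ν), forall_mem_range.2 fun v => ?_⟩
  have hH0 := add_le_potential_add hH hmono 0 v
  have hF0 := neg_le_of_abs_le ((F 0).le_opNorm v)
  have hquad : ‖F 0‖ * ‖v‖ - ν / 2 * ‖v‖ ^ 2 ≤ ‖F 0‖ ^ 2 / (2 * ν) := by
    rw [le_div_iff₀ (by positivity)]
    nlinarith [sq_nonneg (ν * ‖v‖ - ‖F 0‖)]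
  rw [zero_add] at hH0
  linarith

theorem potential_add_le_sub_of_smul_eq_neg_apply {A : X →L[ℝ] X →L[ℝ] ℝ} {α L δ : ℝ}
    {x s : X}
    (hH : ∀ u v : X, ∀ t : ℝ, HasDerivAt (fun s : ℝ => H (u + s • v)) (F (u + t • v) v) t)
    (hlip : ∀ u v w : X, |F u w - F v w| ≤ L * ‖u - v‖ * ‖w‖) (hδ : 0 < δ)
    (hA : ∀ v : X, α * ‖v‖ ^ 2 ≤ A v v) (hs : δ • F x = -A s) :
    H (x + s) ≤ H x - (α / δ - L / 2) * ‖s‖ ^ 2 := by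
  linarith [potential_add_le hH hlip x s, apply_le_of_smul_eq_neg_apply hδ hA hs]

theorem lipschitzWith_of_abs_apply_sub_le {L : ℝ} (hL : 0 ≤ L)
    (hlip : ∀ u v w : X, |F u w - F v w| ≤ L * ‖u - v‖ * ‖w‖) :
    LipschitzWith (Real.toNNReal L) F :=
  LipschitzWith.of_dist_le' fun u v => by
    rw [dist_eq_norm, dist_eq_norm]
    exact (F u - F v).opNorm_le_bound (by positivity) (hlip u v)

theorem antilipschitzWith_of_strongly_monotone {ν : ℝ} (hν : 0 < ν)
    (hmono : ∀ u v : X, ν * ‖u - v‖ ^ 2 ≤ F u (u - v) - F v (u - v)) :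
    AntilipschitzWith (Real.toNNReal ν⁻¹) F := by
  refine AntilipschitzWith.of_le_mul_dist fun u v => ?_
  rw [Real.coe_toNNReal _ (inv_nonneg.2 hν.le), dist_eq_norm, dist_eq_norm,
    inv_mul_eq_div, le_div_iff₀' hν]
  rcases (norm_nonneg (u - v)).eq_or_lt with h | h
  · rw [← h, mul_zero]
    positivity
  have h₁ := hmono u v
  have h₂ := le_of_abs_le ((F u - F v).le_opNorm (u - v))
  rw [sub_apply] at h₂
  nlinarith

end PotentialOperator

theorem AntilipschitzWith.exists_tendsto_of_tendsto_comp {α β : Type*} [MetricSpace α]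
    [MetricSpace β] [CompleteSpace α] {K : NNReal} {f : α → β} (hf : AntilipschitzWith K f)
    (hfc : UniformContinuous f) {u : ℕ → α} {y : β} (hu : Tendsto (f ∘ u) atTop (𝓝 y)) :
    ∃ x, f x = y ∧ Tendsto u atTop (𝓝 x) := by
  obtain ⟨x, rfl⟩ : y ∈ range f := (hf.isClosed_range hfc).closure_subset
    (mem_closure_of_tendsto hu (Eventually.of_forall fun n => mem_range_self (u n)))
  exact ⟨x, rfl, (hf.isInducing hfc.continuous).tendsto_nhds_iff.2 hu⟩

theorem tendsto_zero_of_le_sub_mul {a b : ℕ → ℝ} {c : ℝ} (hc : 0 < c) (hb : ∀ n, 0 ≤ b n)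
    (ha : BddBelow (range a)) (hab : ∀ n, a (n + 1) ≤ a n - c * b n) :
    Tendsto b atTop (𝓝 0) := by
  obtain ⟨m, hm⟩ := ha
  have hsum : ∀ n, c * ∑ i ∈ Finset.range n, b i ≤ a 0 - a n := by
    intro n
    induction n with
    | zero => simp
    | succ n ih => rw [Finset.sum_range_succ, mul_add]; linarith [hab n]
  refine (summable_of_sum_range_le (c := (a 0 - m) / c) hb fun n => ?_).tendsto_atTop_zero
  rw [le_div_iff₀' hc]
  linarith [hsum n, hm (mem_range_self n)]




theorem damped_newton_convergence_general
    {X : Type*} [NormedAddCommGroup X] [InnerProductSpace ℝ X] [CompleteSpace X]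
    (F : X → X →L[ℝ] ℝ) (L ν : ℝ) (hL : 0 < L) (hν : 0 < ν)
    (hlip : ∀ u v w : X, |F u w - F v w| ≤ L * ‖u - v‖ * ‖w‖)
    (hmono : ∀ u v : X, ν * ‖u - v‖ ^ 2 ≤ F u (u - v) - F v (u - v))
    -- (N1)
    (F' : X → X →L[ℝ] X →L[ℝ] ℝ)
    (αF' βF' : ℝ) (hαF' : 0 < αF') (hβF' : 0 < βF')
    (hF'coer : ∀ u v : X, αF' * ‖v‖ ^ 2 ≤ F' u v v)
    (hF'bdd : ∀ u v w : X, F' u v w ≤ βF' * ‖v‖ * ‖w‖)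
    -- (N3)
    (H : X → ℝ)
    (hH' : ∀ u v : X, ∀ t : ℝ,
      HasDerivAt (fun s : ℝ => H (u + s • v)) (F (u + t • v) v) t)
    -- (N4)
    (δ : X → ℝ) (δmin δmax : ℝ) (hδmin : 0 < δmin) (hδle : δmin ≤ δmax)
    (hδmax : δmax < 2 * αF' / L)
    (hδrange : ∀ u : X, δ u ∈ Set.Icc δmin δmax)
    (u : ℕ → X)
    (hiter : ∀ n : ℕ, ∀ v : X,
      F' (u n) (u (n + 1)) v = F' (u n) (u n) v - δ (u n) * F (u n) v) :
    ∃ ustar : X, Filter.Tendsto u Filter.atTop (nhds ustar) ∧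
      (∀ v : X, F ustar v = 0) ∧
      (∀ w : X, (∀ v : X, F w v = 0) → w = ustar) := by
  set e : ℕ → X := fun n => u (n + 1) - u n
  have hδ : ∀ x, 0 < δ x := fun x => hδmin.trans_le (hδrange x).1
  have hstep : ∀ n, δ (u n) • F (u n) = -F' (u n) (e n) := fun n => by
    ext v
    simp [e, hiter]
  have hres : ∀ n, ‖F (u n)‖ ≤ βF' / δmin * ‖e n‖ := fun n =>
    (norm_le_of_smul_eq_neg_apply (hδ _) hβF'.le (hF'bdd _) (hstep n)).trans <| by
      gcongr; exact (hδrange _).1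
  have hc : 0 < αF' / δmax - L / 2 := by
    rw [lt_div_iff₀ hL] at hδmax
    rw [sub_pos, div_lt_div_iff₀ two_pos (hδmin.trans_le hδle)]
    linarith
  have hdec : ∀ n, H (u (n + 1)) ≤ H (u n) - (αF' / δmax - L / 2) * ‖e n‖ ^ 2 := fun n => by
    have h := potential_add_le_sub_of_smul_eq_neg_apply hH' hlip (hδ _) (hF'coer _) (hstep n)
    rw [add_sub_cancel] at h
    refine h.trans ?_
    gcongr
    exacts [hδ _, (hδrange _).2]
  have he : Tendsto (fun n => ‖e n‖) atTop (𝓝 0) := by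
    have := tendsto_zero_of_le_sub_mul hc (fun n => sq_nonneg ‖e n‖)
      ((bddBelow_range_potential hν hH' hmono).mono (range_comp_subset_range u H)) hdec
    simpa [Real.sqrt_sq (norm_nonneg _)] using this.sqrt
  have hFu : Tendsto (F ∘ u) atTop (𝓝 0) := tendsto_zero_iff_norm_tendsto_zero.2 <|
    squeeze_zero (fun n => norm_nonneg _) hres (by simpa using he.const_mul (βF' / δmin))
  have hanti := antilipschitzWith_of_strongly_monotone hν hmono
  obtain ⟨ustar, hzero, hlim⟩ := hanti.exists_tendsto_of_tendsto_comp
    (lipschitzWith_of_abs_apply_sub_le hL.le hlip).uniformContinuous hFu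
  refine ⟨ustar, hlim, fun v => by rw [hzero]; rfl, fun w hw => hanti.injective ?_⟩
  ext v
  rw [hw, hzero]
  rfl

/-- Convergence of the damped Newton iteration for a Lipschitz continuous and
strongly monotone operator on a real Hilbert space. -/
theorem damped_newton_convergence
    {X : Type*} [NormedAddCommGroup X] [InnerProductSpace ℝ X] [CompleteSpace X]
    (F : X → X →L[ℝ] ℝ) (L ν : ℝ) (hL : 0 < L) (hν : 0 < ν)
    (hlip : ∀ u v w : X, |F u w - F v w| ≤ L * ‖u - v‖ * ‖w‖)
    (hmono : ∀ u v : X, ν * ‖u - v‖ ^ 2 ≤ F u (u - v) - F v (u - v))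
    -- (N1)
    (F' : X → X →L[ℝ] X →L[ℝ] ℝ)
    (hF'deriv : ∀ u v w : X,
      HasDerivAt (fun t : ℝ => F (u + t • v) w) (F' u v w) 0)
    (hF'symm : ∀ u v w : X, F' u v w = F' u w v)
    (αF' βF' : ℝ) (hαF' : 0 < αF') (hβF' : 0 < βF')
    (hF'coer : ∀ u v : X, αF' * ‖v‖ ^ 2 ≤ F' u v v)
    (hF'bdd : ∀ u v w : X, F' u v w ≤ βF' * ‖v‖ * ‖w‖)
    -- (N2)
    (G : X → ℝ)
    (hG' : ∀ u v : X, ∀ t : ℝ,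
      HasDerivAt (fun s : ℝ => G (u + s • v)) (F' (u + t • v) (u + t • v) v) t)
    (hG'cont : ∀ w : X, Continuous fun u => F' u u w)
    -- (N3)
    (H : X → ℝ)
    (hH' : ∀ u v : X, ∀ t : ℝ,
      HasDerivAt (fun s : ℝ => H (u + s • v)) (F (u + t • v) v) t)
    -- (N4)
    (δ : X → ℝ) (δmin δmax : ℝ) (hδmin : 0 < δmin) (hδle : δmin ≤ δmax)
    (hδmax : δmax < 2 * αF' / L)
    (hδrange : ∀ u : X, δ u ∈ Set.Icc δmin δmax) (hδcont : Continuous δ)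
    (u : ℕ → X)
    (hiter : ∀ n : ℕ, ∀ v : X,
      F' (u n) (u (n + 1)) v = F' (u n) (u n) v - δ (u n) * F (u n) v) :
    ∃ ustar : X, Filter.Tendsto u Filter.atTop (nhds ustar) ∧
      (∀ v : X, F ustar v = 0) ∧
      (∀ w : X, (∀ v : X, F w v = 0) → w = ustar) :=
  damped_newton_convergence_general F L ν hL hν hlip hmono F' αF' βF' hαF' hβF' hF'coer hF'bdd H hH'
    δ δmin δmax hδmin hδle hδmax hδrange u hiter
end

section
/- Let X be a real Hilbert space and F : X → X* Lipschitz continuous with constant L_F > 0. Assume for each u ∈ X there is a linear map F'(u) : X → X* with ⟨F'(u)v, v⟩ ≥ α_{F'}‖v‖_X² for all v ∈ X (α_{F'} > 0 independent of u), and that there is a functional H : X → ℝ such that for all u, v ∈ X the function t ↦ H(u + t v) is differentiable with derivative t ↦ ⟨F(u + t v), v⟩ (i.e. H' = F in the Gâteaux sense). Let δ_max satisfy 0 < δ_max < 2α_{F'}/L_F and let {uⁿ}ₙ₌₀^∞ ⊆ X and δⁿ ∈ (0, δ_max] satisfy the damped Newton relation ⟨F'(uⁿ)uⁿ⁺¹,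 v⟩ = ⟨F'(uⁿ)uⁿ, v⟩ − δⁿ⟨F(uⁿ), v⟩ for all v ∈ X and n ≥ 0. Then for every n ≥ 0, H(uⁿ) − H(uⁿ⁺¹) ≥ C‖uⁿ⁺¹ − uⁿ‖_X², where C := α_{F'}/δ_max − L_F/2 > 0. -/
/-!
Write `d = uⁿ⁺¹ - uⁿ`. Testing the Newton relation with `v = d` and using coercivity of
`F'(uⁿ)` gives `α_{F'}‖d‖² ≤ -δⁿ⟨F(uⁿ), d⟩`, so `-⟨F(uⁿ), d⟩ ≥ (α_{F'}/δ_max)‖d‖²`.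
On the other hand, since `H' = F` is `L_F`-Lipschitz, the descent lemma gives
`H(uⁿ⁺¹) ≤ H(uⁿ) + ⟨F(uⁿ), d⟩ + (L_F/2)‖d‖²`. Adding the two yields the claim.
-/

open Set

-- Mean value theorem for `φ t - ψ 0 * t - K / 2 * t ^ 2`, whose derivative is `≤ 0` on `(0, 1)`.
theorem image_one_le_of_hasDerivAt_le_linear {φ ψ : ℝ → ℝ} {K : ℝ}
    (hφ : ∀ t, HasDerivAt φ (ψ t) t) (hψ : ∀ t ∈ Ioo (0 : ℝ) 1, ψ t ≤ ψ 0 + K * t) :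
    φ 1 ≤ φ 0 + ψ 0 + K / 2 := by
  set h : ℝ → ℝ := fun t => φ t - ψ 0 * t - K / 2 * t ^ 2
  have hh : ∀ t, HasDerivAt h (ψ t - ψ 0 - K * t) t := fun t =>
    (((hφ t).sub ((hasDerivAt_id' t).const_mul (ψ 0))).sub
      ((hasDerivAt_pow 2 t).const_mul (K / 2))).congr_deriv (by ring)
  obtain ⟨c, hc, hslope⟩ := exists_hasDerivAt_eq_slope h _ zero_lt_one
    (fun t _ => (hh t).continuousAt.continuousWithinAt) (fun t _ => hh t)
  have : (h 1 - h 0) / (1 - 0) ≤ 0 := hslope ▸ by linarith [hψ c hc]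
  simp only [h, sub_zero, div_one] at this
  linarith

theorem apply_add_le_of_lipschitz_gateaux {E : Type*} [SeminormedAddCommGroup E]
    [NormedSpace ℝ E] {f : E → ℝ} {g : E → E → ℝ} {L : ℝ}
    (hf : ∀ x d : E, ∀ t : ℝ, HasDerivAt (fun s : ℝ => f (x + s • d)) (g (x + t • d) d) t)
    (hg : ∀ x y w : E, |g x w - g y w| ≤ L * ‖x - y‖ * ‖w‖) (x d : E) :
    f (x + d) ≤ f x + g x d + L / 2 * ‖d‖ ^ 2 := by
  have hline : ∀ t ∈ Ioo (0 : ℝ) 1,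
      g (x + t • d) d ≤ g (x + (0 : ℝ) • d) d + L * ‖d‖ ^ 2 * t := by
    intro t ht
    have hdist : ‖x + t • d - x‖ = t * ‖d‖ := by
      rw [add_sub_cancel_left, norm_smul, Real.norm_of_nonneg ht.1.le]
    have := (abs_le.mp (hg (x + t • d) x d)).2
    rw [hdist] at this
    rw [zero_smul, add_zero]
    linarith
  simpa [mul_div_right_comm] using image_one_le_of_hasDerivAt_le_linear (hf x d) hline

theorem div_mul_norm_sq_le_neg_apply_of_damped_step {E : Type*} [SeminormedAddCommGroup E]
    [NormedSpace ℝ E] {A : E →L[ℝ] E →L[ℝ] ℝ} {g : E → ℝ} {x y : E} {α δ δmax : ℝ}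
    (hα : 0 ≤ α) (hcoer : ∀ v, α * ‖v‖ ^ 2 ≤ A v v) (hδ : 0 < δ) (hδle : δ ≤ δmax)
    (hstep : ∀ v, A y v = A x v - δ * g v) :
    α / δmax * ‖y - x‖ ^ 2 ≤ -g (y - x) := by
  have hAd : A (y - x) (y - x) = -(δ * g (y - x)) := by
    rw [A.map_sub, sub_apply, hstep]
    ring
  have hcoer_d : α * ‖y - x‖ ^ 2 ≤ δ * -g (y - x) := by
    linarith [hcoer (y - x)]
  have hg_nonpos : 0 ≤ -g (y - x) :=
    nonneg_of_mul_nonneg_right ((by positivity : 0 ≤ α * ‖y - x‖ ^ 2).trans hcoer_d) hδ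
  rw [div_mul_eq_mul_div, div_le_iff₀ (hδ.trans_le hδle)]
  calc α * ‖y - x‖ ^ 2 ≤ δ * -g (y - x) := hcoer_d
    _ ≤ δmax * -g (y - x) := mul_le_mul_of_nonneg_right hδle hg_nonpos
    _ = -g (y - x) * δmax := mul_comm _ _

theorem damped_newton_energy_decay_general
    {X : Type*} [NormedAddCommGroup X] [InnerProductSpace ℝ X]
    (F : X → X →L[ℝ] ℝ) (L : ℝ) (hL : 0 < L)
    (hlip : ∀ u v w : X, |F u w - F v w| ≤ L * ‖u - v‖ * ‖w‖)
    (F' : X → X →L[ℝ] X →L[ℝ] ℝ)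
    (αF' : ℝ) (hαF' : 0 < αF')
    (hF'coer : ∀ u v : X, αF' * ‖v‖ ^ 2 ≤ F' u v v)
    (H : X → ℝ)
    (hH' : ∀ u v : X, ∀ t : ℝ,
      HasDerivAt (fun s : ℝ => H (u + s • v)) (F (u + t • v) v) t)
    (δmax : ℝ) (hδmax0 : 0 < δmax) (hδmax : δmax < 2 * αF' / L)
    (u : ℕ → X) (δ : ℕ → ℝ)
    (hδ : ∀ n : ℕ, 0 < δ n ∧ δ n ≤ δmax)
    (hiter : ∀ n : ℕ, ∀ v : X,
      F' (u n) (u (n + 1)) v = F' (u n) (u n) v - δ n * F (u n) v) :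
    0 < αF' / δmax - L / 2 ∧
    ∀ n : ℕ, H (u n) - H (u (n + 1)) ≥
      (αF' / δmax - L / 2) * ‖u (n + 1) - u n‖ ^ 2 := by
  refine ⟨?_, fun n => ?_⟩
  · rw [sub_pos, div_lt_div_iff₀ two_pos hδmax0]
    linarith [(lt_div_iff₀ hL).mp hδmax]
  · have hdescent := apply_add_le_of_lipschitz_gateaux hH' hlip (u n) (u (n + 1) - u n)
    have hdecrease := div_mul_norm_sq_le_neg_apply_of_damped_step hαF'.le (hF'coer (u n))
      (hδ n).1 (hδ n).2 (hiter n)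
    rw [add_sub_cancel] at hdescent
    linarith

/-- Energy decay of the damped Newton iteration: the potential `H` (with
`H' = F` in the Gâteaux sense) decreases by at least
`C‖uⁿ⁺¹ - uⁿ‖²` per step, where `C = α_{F'}/δ_max - L_F/2 > 0`. -/
theorem damped_newton_energy_decay
    {X : Type*} [NormedAddCommGroup X] [InnerProductSpace ℝ X] [CompleteSpace X]
    (F : X → X →L[ℝ] ℝ) (L : ℝ) (hL : 0 < L)
    (hlip : ∀ u v w : X, |F u w - F v w| ≤ L * ‖u - v‖ * ‖w‖)
    (F' : X → X →L[ℝ] X →L[ℝ] ℝ)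
    (αF' : ℝ) (hαF' : 0 < αF')
    (hF'coer : ∀ u v : X, αF' * ‖v‖ ^ 2 ≤ F' u v v)
    (H : X → ℝ)
    (hH' : ∀ u v : X, ∀ t : ℝ,
      HasDerivAt (fun s : ℝ => H (u + s • v)) (F (u + t • v) v) t)
    (δmax : ℝ) (hδmax0 : 0 < δmax) (hδmax : δmax < 2 * αF' / L)
    (u : ℕ → X) (δ : ℕ → ℝ)
    (hδ : ∀ n : ℕ, 0 < δ n ∧ δ n ≤ δmax)
    (hiter : ∀ n : ℕ, ∀ v : X,
      F' (u n) (u (n + 1)) v = F' (u n) (u n) v - δ n * F (u n) v) :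
    0 < αF' / δmax - L / 2 ∧
    ∀ n : ℕ, H (u n) - H (u (n + 1)) ≥
      (αF' / δmax - L / 2) * ‖u (n + 1) - u n‖ ^ 2 :=
  damped_newton_energy_decay_general F L hL hlip F' αF' hαF' hF'coer H hH' δmax hδmax0 hδmax u δ hδ
    hiter
end

section
/- Let X be a real Hilbert space and X_N ⊆ X a closed linear subspace. Let F : X → X* be Lipschitz continuous with constant L_F > 0 and strongly monotone with constant ν > 0, and let u* ∈ X satisfy ⟨F(u*), v⟩ = 0 for all v ∈ X. For each u ∈ X let a(u;·,·) be a continuous bilinear form on X with a(u;v,v) ≥ α‖v‖_X² and a(u;v,w) ≤ β‖v‖_X‖w‖_X for all v, w ∈ X (α, β > 0 independent of u), and define f(u) ∈ X* by ⟨f(u),w⟩ = a(u;u,w) − ⟨F(u),w⟩. Suppose u_Nⁿ, u_Nⁿ⁺¹ ∈ X_N satisfy the discrete iteration a(u_Nⁿ; u_Nⁿ⁺¹, v) = ⟨f(u_Nⁿ), v⟩ for all v ∈ X_N, and suppose η ≥ 0 is a bound for the residual: a(u_Nⁿ; u_Nⁿ⁺¹, v) − ⟨f(u_Nⁿ), v⟩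 ≤ η for all v ∈ X with ‖v‖_X = 1. Then ‖u* − u_Nⁿ⁺¹‖_X ≤ (β/(αν)) η + ((β + L_F)/ν) ‖u_Nⁿ⁺¹ − u_Nⁿ‖_X. -/
/-- A posteriori error bound for the iterative linearized Galerkin method,
based on a linear elliptic reconstruction: the error is controlled by the
discretization estimator `η` and the linearization term `‖uⁿ⁺¹ - uⁿ‖`. -/
theorem ilg_aposteriori_linear_reconstruction
    {X : Type*} [NormedAddCommGroup X] [InnerProductSpace ℝ X] [CompleteSpace X]
    (XN : Submodule ℝ X) (hXN : IsClosed (XN : Set X))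
    (F : X → X →L[ℝ] ℝ) (L ν : ℝ) (hL : 0 < L) (hν : 0 < ν)
    (hlip : ∀ u v w : X, |F u w - F v w| ≤ L * ‖u - v‖ * ‖w‖)
    (hmono : ∀ u v : X, ν * ‖u - v‖ ^ 2 ≤ F u (u - v) - F v (u - v))
    (ustar : X) (hustar : ∀ v : X, F ustar v = 0)
    (a : X → X →ₗ[ℝ] X →ₗ[ℝ] ℝ)
    (α β : ℝ) (hα : 0 < α) (hβ : 0 < β)
    (hcoer : ∀ u v : X, α * ‖v‖ ^ 2 ≤ a u v v)
    (hbdd : ∀ u v w : X, a u v w ≤ β * ‖v‖ * ‖w‖)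
    (un un' : X) (hun : un ∈ XN) (hun' : un' ∈ XN)
    (hiter : ∀ v ∈ XN, a un un' v = a un un v - F un v)
    (η : ℝ) (hη0 : 0 ≤ η)
    (hres : ∀ v : X, ‖v‖ = 1 → a un un' v - (a un un v - F un v) ≤ η) :
    ‖ustar - un'‖ ≤ β / (α * ν) * η + (β + L) / ν * ‖un' - un‖ := by
  set e := ustar - un' with he
  by_cases hez : e = 0
  · rw [hez, norm_zero]
    positivity
  · have hcpos : 0 < ‖e‖ := norm_pos_iff.mpr hez
    -- strong monotonicity + F ustar = 0
    have h1 : ν * ‖e‖ ^ 2 ≤ - F un' e := by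
      have h := hmono ustar un'
      have h0 := hustar e
      rw [← he] at h
      linarith
    -- residual bound tested with -‖e‖⁻¹ • e
    have hres' : - (a un un' e - (a un un e - F un e)) ≤ η * ‖e‖ := by
      have hv1 : ‖(-‖e‖⁻¹) • e‖ = 1 := by
        rw [norm_smul, norm_neg, norm_inv, norm_norm]
        field_simp
      have h2 := hres ((-‖e‖⁻¹) • e) hv1
      have e1 : a un un' ((-‖e‖⁻¹) • e) = (-‖e‖⁻¹) * a un un' e := by
        rw [map_smul, smul_eq_mul]
      have e2 : a un un ((-‖e‖⁻¹) • e) = (-‖e‖⁻¹) * a un un e := by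
        rw [map_smul, smul_eq_mul]
      have e3 : F un ((-‖e‖⁻¹) • e) = (-‖e‖⁻¹) * F un e := by
        rw [map_smul, smul_eq_mul]
      rw [e1, e2, e3] at h2
      have h3 : (-‖e‖⁻¹) * (a un un' e - (a un un e - F un e)) ≤ η := by linarith
      have h4 := mul_le_mul_of_nonneg_left h3 hcpos.le
      calc - (a un un' e - (a un un e - F un e))
          = ‖e‖ * ((-‖e‖⁻¹) * (a un un' e - (a un un e - F un e))) := by
            field_simp
        _ ≤ ‖e‖ * η := h4
        _ = η * ‖e‖ := mul_comm _ _
    -- boundedness of a on (un' - un)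
    have hb : a un (un' - un) e ≤ β * ‖un' - un‖ * ‖e‖ := hbdd un (un' - un) e
    have hbsplit : a un (un' - un) e = a un un' e - a un un e := by
      have hm : (a un) (un' - un) = (a un) un' - (a un) un := map_sub _ _ _
      rw [hm, LinearMap.sub_apply]
    -- Lipschitz
    have hlip' : - (F un' e - F un e) ≤ L * ‖un' - un‖ * ‖e‖ := by
      have habs := hlip un' un e
      linarith [neg_le_of_abs_le habs]
    -- combine
    have hkey : ν * ‖e‖ ^ 2 ≤ (η + (β + L) * ‖un' - un‖) * ‖e‖ := by
      nlinarith [h1, hres', hb, hlip']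
    have hkey2 : ν * ‖e‖ ≤ η + (β + L) * ‖un' - un‖ := by
      nlinarith [hkey, hcpos]
    -- α ≤ β
    have hab : α ≤ β := by
      have h5 := hcoer un e
      have h6 := hbdd un e e
      rw [show β * ‖e‖ * ‖e‖ = β * ‖e‖ ^ 2 by ring] at h6
      nlinarith [pow_pos hcpos 2]
    have heq : β / (α * ν) * η + (β + L) / ν * ‖un' - un‖
        = (β * η + (β + L) * α * ‖un' - un‖) / (α * ν) := by
      field_simp
    rw [heq, le_div_iff₀ (by positivity)]
    nlinarith [hkey2, norm_nonneg (un' - un), hcpos]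
end

section
/- Let X be a real Hilbert space, X_N ⊆ X a linear subspace, F : X → X* Lipschitz continuous with constant L_F > 0 and strongly monotone with constant ν > 0, and u* ∈ X with ⟨F(u*), v⟩ = 0 for all v ∈ X. For each u ∈ X let a(u;·,·) be a bilinear form on X with a(u;v,w) ≤ β‖v‖_X‖w‖_X for all v, w ∈ X (β > 0 independent of u), and set ⟨f(u),w⟩ = a(u;u,w) − ⟨F(u),w⟩. Suppose u_Nⁿ, u_Nⁿ⁺¹ ∈ X_N satisfy a(u_Nⁿ; u_Nⁿ⁺¹, v) = ⟨f(u_Nⁿ), v⟩ for all v ∈ X_N, and ũ ∈ X is the elliptic reconstruction satisfying a(u_Nⁿ; ũ, v) = ⟨f(u_Nⁿ), v⟩ for all v ∈ X. Then ν‖u* − u_Nⁿ⁺¹‖_X ≤ β‖ũ − u_Nⁿ⁺¹‖_X + (β + L_F)‖u_Nⁿ⁺¹ − u_Nⁿ‖_X. -/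
/-!
Testing strong monotonicity with `e = u* - uₙ₊₁` and using `F u* = 0` gives
`ν ‖e‖² ≤ -⟨F uₙ₊₁, e⟩`. Since the reconstruction solves `a(uₙ; ũ - uₙ, e) = -⟨F uₙ, e⟩` on all
of `X`, the residual splits as `⟨F uₙ - F uₙ₊₁, e⟩ + a(uₙ; ũ - uₙ₊₁, e) + a(uₙ; uₙ₊₁ - uₙ, e)`,
which Lipschitz continuity and boundedness of `a` control by a multiple of `‖e‖`.
-/

lemma le_of_mul_sq_le_mul {ν x R : ℝ} (hx : 0 ≤ x) (hR : 0 ≤ R) (h : ν * x ^ 2 ≤ R * x) :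
    ν * x ≤ R := by
  rcases hx.eq_or_lt with rfl | hx
  · simpa using hR
  · exact le_of_mul_le_mul_right (by linarith) hx

section

variable {X : Type*} [NormedAddCommGroup X] [NormedSpace ℝ X]

lemma mul_norm_sub_sq_le_neg_apply_of_zero {F : X → X →L[ℝ] ℝ} {ν : ℝ}
    (hmono : ∀ u v : X, ν * ‖u - v‖ ^ 2 ≤ F u (u - v) - F v (u - v))
    {ustar : X} (hustar : ∀ v : X, F ustar v = 0) (w : X) :
    ν * ‖ustar - w‖ ^ 2 ≤ -F w (ustar - w) := by
  simpa [hustar] using hmono ustar w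

lemma neg_apply_eq_of_reconstruction {F : X → X →L[ℝ] ℝ} {a : X → X →ₗ[ℝ] X →ₗ[ℝ] ℝ}
    {un utilde : X} (hrec : ∀ v : X, a un utilde v = a un un v - F un v) (v : X) :
    -F un v = a un (utilde - un) v := by
  rw [map_sub, LinearMap.sub_apply, hrec]
  ring

end

theorem ilg_aposteriori_via_reconstruction_general
    {X : Type*} [NormedAddCommGroup X] [InnerProductSpace ℝ X]
    (F : X → X →L[ℝ] ℝ) (L ν : ℝ) (hL : 0 < L)
    (hlip : ∀ u v w : X, |F u w - F v w| ≤ L * ‖u - v‖ * ‖w‖)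
    (hmono : ∀ u v : X, ν * ‖u - v‖ ^ 2 ≤ F u (u - v) - F v (u - v))
    (ustar : X) (hustar : ∀ v : X, F ustar v = 0)
    (a : X → X →ₗ[ℝ] X →ₗ[ℝ] ℝ)
    (β : ℝ) (hβ : 0 < β)
    (hbdd : ∀ u v w : X, a u v w ≤ β * ‖v‖ * ‖w‖)
    (un un' : X)
    (utilde : X)
    (hrec : ∀ v : X, a un utilde v = a un un v - F un v) :
    ν * ‖ustar - un'‖ ≤ β * ‖utilde - un'‖ + (β + L) * ‖un' - un‖ := by
  set e := ustar - un'
  have hresidual : -F un' e = (F un e - F un' e) + a un (utilde - un') e + a un (un' - un) e := by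
    have hreconstructed := neg_apply_eq_of_reconstruction hrec e
    rw [show utilde - un = (utilde - un') + (un' - un) by abel, map_add,
      LinearMap.add_apply] at hreconstructed
    linarith
  refine le_of_mul_sq_le_mul (norm_nonneg e) (by positivity) ?_
  calc ν * ‖e‖ ^ 2 ≤ -F un' e := mul_norm_sub_sq_le_neg_apply_of_zero hmono hustar un'
    _ ≤ L * ‖un - un'‖ * ‖e‖ + β * ‖utilde - un'‖ * ‖e‖ + β * ‖un' - un‖ * ‖e‖ := by
      rw [hresidual]
      gcongr
      · exact (le_abs_self _).trans (hlip un un' e)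
      · exact hbdd un _ e
      · exact hbdd un _ e
    _ = (β * ‖utilde - un'‖ + (β + L) * ‖un' - un‖) * ‖e‖ := by rw [norm_sub_rev un]; ring

/-- Intermediate a posteriori error bound in terms of the (linear) elliptic
reconstruction `ũ` of the discrete iterate. -/
theorem ilg_aposteriori_via_reconstruction
    {X : Type*} [NormedAddCommGroup X] [InnerProductSpace ℝ X] [CompleteSpace X]
    (XN : Submodule ℝ X)
    (F : X → X →L[ℝ] ℝ) (L ν : ℝ) (hL : 0 < L) (hν : 0 < ν)
    (hlip : ∀ u v w : X, |F u w - F v w| ≤ L * ‖u - v‖ * ‖w‖)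
    (hmono : ∀ u v : X, ν * ‖u - v‖ ^ 2 ≤ F u (u - v) - F v (u - v))
    (ustar : X) (hustar : ∀ v : X, F ustar v = 0)
    (a : X → X →ₗ[ℝ] X →ₗ[ℝ] ℝ)
    (β : ℝ) (hβ : 0 < β)
    (hbdd : ∀ u v w : X, a u v w ≤ β * ‖v‖ * ‖w‖)
    (un un' : X) (hun : un ∈ XN) (hun' : un' ∈ XN)
    (hiter : ∀ v ∈ XN, a un un' v = a un un v - F un v)
    (utilde : X)
    (hrec : ∀ v : X, a un utilde v = a un un v - F un v) :
    ν * ‖ustar - un'‖ ≤ β * ‖utilde - un'‖ + (β + L) * ‖un' - un‖ :=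
  ilg_aposteriori_via_reconstruction_general F L ν hL hlip hmono ustar hustar a β hβ hbdd un un'
    utilde hrec
end

section
/- Let X and H be real Hilbert spaces with a continuous linear embedding ι : X → H, let X_N ⊆ X be a linear subspace, and let F : X → X* be strongly monotone with constant ν > 0. Let u ∈ X_N and ψ ∈ X_N be such that (ιψ, ιv)_H = ⟨F(u), v⟩ for all v ∈ X_N (ψ is the discrete Riesz representative of F(u) with respect to the H-inner product). Suppose ũ ∈ X satisfies the nonlinear elliptic reconstruction equation ⟨F(ũ), v⟩ = (ιψ, ιv)_H for all v ∈ X, and suppose η ≥ 0 satisfies (ιψ, ιw)_H − ⟨F(u), w⟩ ≤ η for all w ∈ X with ‖w‖_X = 1. Then ‖ũ − u‖_X ≤ η/ν. -/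
/-! Testing the residual `(ιψ, ι ·)_H − F(u)` against unit vectors bounds its dual norm by `η`,
and the reconstruction equation identifies that residual with `F(ũ) − F(u)`. Strong monotonicity
gives `ν‖ũ − u‖² ≤ ⟨F(ũ) − F(u), ũ − u⟩ ≤ ‖F(ũ) − F(u)‖ ‖ũ − u‖`, hence `‖ũ − u‖ ≤ η / ν`. -/

section

variable {E : Type*} [NormedAddCommGroup E] [NormedSpace ℝ E]

theorem ContinuousLinearMap.opNorm_le_of_unit_norm_apply_le {f : E →L[ℝ] ℝ} {C : ℝ}
    (hC : 0 ≤ C) (hf : ∀ x, ‖x‖ = 1 → f x ≤ C) : ‖f‖ ≤ C :=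
  opNorm_le_of_unit_norm hC fun x hx =>
    abs_le.2 ⟨neg_le.1 (by simpa using hf (-x) (by rwa [norm_neg])), hf x hx⟩

theorem norm_sub_le_opNorm_sub_div_of_strongly_monotone {F : E → E →L[ℝ] ℝ} {ν : ℝ}
    (hν : 0 < ν) (hmono : ∀ u v : E, ν * ‖u - v‖ ^ 2 ≤ F u (u - v) - F v (u - v)) (u v : E) :
    ‖u - v‖ ≤ ‖F u - F v‖ / ν := by
  rw [le_div_iff₀ hν]
  have hbound : ν * ‖u - v‖ ^ 2 ≤ ‖F u - F v‖ * ‖u - v‖ :=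
    calc ν * ‖u - v‖ ^ 2 ≤ (F u - F v) (u - v) := hmono u v
      _ ≤ ‖(F u - F v) (u - v)‖ := Real.le_norm_self _
      _ ≤ ‖F u - F v‖ * ‖u - v‖ := (F u - F v).le_opNorm _
  rcases (norm_nonneg (u - v)).eq_or_lt with h | h
  · rw [← h, zero_mul]
    exact norm_nonneg _
  · nlinarith

end

theorem nonlinear_reconstruction_estimate_general
    {X : Type*} [NormedAddCommGroup X] [InnerProductSpace ℝ X]
    {H : Type*} [NormedAddCommGroup H] [InnerProductSpace ℝ H]
    (ι : X →L[ℝ] H)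
    (F : X → X →L[ℝ] ℝ) (ν : ℝ) (hν : 0 < ν)
    (hmono : ∀ u v : X, ν * ‖u - v‖ ^ 2 ≤ F u (u - v) - F v (u - v))
    (u ψ : X)
    (utilde : X)
    (hrec : ∀ v : X, F utilde v = (inner ℝ (ι ψ) (ι v) : ℝ))
    (η : ℝ) (hη0 : 0 ≤ η)
    (hres : ∀ w : X, ‖w‖ = 1 → (inner ℝ (ι ψ) (ι w) : ℝ) - F u w ≤ η) :
    ‖utilde - u‖ ≤ η / ν := by
  have hresidual : F utilde - F u = (innerSL ℝ (ι ψ)).comp ι - F u := by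
    ext v
    simp [hrec]
  calc ‖utilde - u‖ ≤ ‖F utilde - F u‖ / ν :=
        norm_sub_le_opNorm_sub_div_of_strongly_monotone hν hmono utilde u
    _ ≤ η / ν := by
        gcongr
        rw [hresidual]
        exact ContinuousLinearMap.opNorm_le_of_unit_norm_apply_le hη0 fun w hw => by
          simpa using hres w hw

/-- Bound on the distance between a discrete iterate and its nonlinear
elliptic reconstruction. -/
theorem nonlinear_reconstruction_estimate
    {X : Type*} [NormedAddCommGroup X] [InnerProductSpace ℝ X] [CompleteSpace X]
    {H : Type*} [NormedAddCommGroup H] [InnerProductSpace ℝ H] [CompleteSpace H]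
    (ι : X →L[ℝ] H) (hι : Function.Injective ι)
    (XN : Submodule ℝ X)
    (F : X → X →L[ℝ] ℝ) (ν : ℝ) (hν : 0 < ν)
    (hmono : ∀ u v : X, ν * ‖u - v‖ ^ 2 ≤ F u (u - v) - F v (u - v))
    (u ψ : X) (hu : u ∈ XN) (hψ : ψ ∈ XN)
    (hriesz : ∀ v ∈ XN, (inner ℝ (ι ψ) (ι v) : ℝ) = F u v)
    (utilde : X)
    (hrec : ∀ v : X, F utilde v = (inner ℝ (ι ψ) (ι v) : ℝ))
    (η : ℝ) (hη0 : 0 ≤ η)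
    (hres : ∀ w : X, ‖w‖ = 1 → (inner ℝ (ι ψ) (ι w) : ℝ) - F u w ≤ η) :
    ‖utilde - u‖ ≤ η / ν :=
  nonlinear_reconstruction_estimate_general ι F ν hν hmono u ψ utilde hrec η hη0 hres
end

section
/- Let X and H be real Hilbert spaces with a continuous linear embedding ι : X → H satisfying ‖ιv‖_H ≤ C_E‖v‖_X for all v ∈ X, let X_N ⊆ X be a linear subspace, F : X → X* Lipschitz continuous with constant L_F > 0 and strongly monotone with constant ν > 0, and u* ∈ X with ⟨F(u*), v⟩ = 0 for all v ∈ X. Let u ∈ X_N and ψ ∈ X_N satisfy (ιψ, ιv)_H = ⟨F(u), v⟩ for all v ∈ X_N, suppose ũ ∈ X satisfies ⟨F(ũ), v⟩ = (ιψ, ιv)_H for all v ∈ X, and let η ≥ 0 satisfy (ιψ, ιw)_H − ⟨F(u), w⟩ ≤ η for all w ∈ X with ‖w‖_X = 1. Then ‖u* − u‖_X ≤ η/ν + (C_E/ν)‖ιψ‖_H. -/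
/-!
Split the error at the reconstruction `ũ`: `u* - u = (u* - ũ) + (ũ - u)`. Testing strong
monotonicity with `ũ - u` turns `F ũ - F u` into the residual `(ιψ, ι·)_H - F u`, whose size
on the unit sphere is `η`; testing it with `u* - ũ` turns `F u* - F ũ` into `-(ιψ, ι·)_H`,
bounded by `C_E ‖ιψ‖_H` through Cauchy–Schwarz and the embedding constant.
-/

section

variable {E : Type*} [NormedAddCommGroup E] [NormedSpace ℝ E]

theorem ContinuousLinearMap.apply_le_mul_norm_of_forall_norm_eq_one (ℓ : E →L[ℝ] ℝ) {η : ℝ}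
    (h : ∀ w : E, ‖w‖ = 1 → ℓ w ≤ η) (v : E) : ℓ v ≤ η * ‖v‖ := by
  rcases eq_or_ne v 0 with rfl | hv
  · simp
  have hv' : 0 < ‖v‖ := norm_pos_iff.mpr hv
  have hunit := h (‖v‖⁻¹ • v) (by rw [norm_smul, norm_inv, norm_norm, inv_mul_cancel₀ hv'.ne'])
  rw [map_smul, smul_eq_mul, inv_mul_le_iff₀ hv', mul_comm] at hunit
  exact hunit

theorem norm_sub_le_div_of_strongly_monotone {F : E → E →L[ℝ] ℝ} {ν : ℝ} (hν : 0 < ν)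
    (hmono : ∀ u v : E, ν * ‖u - v‖ ^ 2 ≤ F u (u - v) - F v (u - v)) {a b : E} {c : ℝ}
    (hc : 0 ≤ c) (h : F a (a - b) - F b (a - b) ≤ c * ‖a - b‖) : ‖a - b‖ ≤ c / ν := by
  rw [le_div_iff₀ hν]
  rcases (norm_nonneg (a - b)).eq_or_lt with h0 | hpos
  · rw [← h0, zero_mul]
    exact hc
  have hsq : ν * ‖a - b‖ ^ 2 ≤ c * ‖a - b‖ := (hmono a b).trans h
  nlinarith

end

theorem ilg_aposteriori_nonlinear_reconstruction_general
    {X : Type*} [NormedAddCommGroup X] [InnerProductSpace ℝ X]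
    {H : Type*} [NormedAddCommGroup H] [InnerProductSpace ℝ H]
    (ι : X →L[ℝ] H)
    (CE : ℝ) (hCE : ∀ v : X, ‖ι v‖ ≤ CE * ‖v‖)
    (F : X → X →L[ℝ] ℝ) (L ν : ℝ) (hν : 0 < ν)
    (hmono : ∀ u v : X, ν * ‖u - v‖ ^ 2 ≤ F u (u - v) - F v (u - v))
    (ustar : X) (hustar : ∀ v : X, F ustar v = 0)
    (u ψ : X)
    (utilde : X)
    (hrec : ∀ v : X, F utilde v = (inner ℝ (ι ψ) (ι v) : ℝ))
    (η : ℝ) (hη0 : 0 ≤ η)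
    (hres : ∀ w : X, ‖w‖ = 1 → (inner ℝ (ι ψ) (ι w) : ℝ) - F u w ≤ η) :
    ‖ustar - u‖ ≤ η / ν + (CE / ν) * ‖ι ψ‖ := by
  have hCEψ : 0 ≤ CE * ‖ι ψ‖ := by
    rcases (norm_nonneg (ι ψ)).eq_or_lt with h0 | hpos
    · rw [← h0, mul_zero]
    · have : 0 < CE := pos_of_mul_pos_left (hpos.trans_le (hCE ψ)) (norm_nonneg ψ)
      positivity
  have hdisc : ‖utilde - u‖ ≤ η / ν := by
    refine norm_sub_le_div_of_strongly_monotone hν hmono hη0 ?_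
    rw [hrec]
    exact ((innerSL ℝ (ι ψ)).comp ι - F u).apply_le_mul_norm_of_forall_norm_eq_one hres _
  have hlin : ‖ustar - utilde‖ ≤ CE * ‖ι ψ‖ / ν := by
    refine norm_sub_le_div_of_strongly_monotone hν hmono hCEψ ?_
    rw [hustar, hrec, zero_sub]
    calc -inner ℝ (ι ψ) (ι (ustar - utilde))
        ≤ ‖ι ψ‖ * ‖ι (ustar - utilde)‖ := (neg_le_abs _).trans (abs_real_inner_le_norm _ _)
      _ ≤ ‖ι ψ‖ * (CE * ‖ustar - utilde‖) := by gcongr; exact hCE _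
      _ = CE * ‖ι ψ‖ * ‖ustar - utilde‖ := by ring
  calc ‖ustar - u‖ ≤ ‖ustar - utilde‖ + ‖utilde - u‖ := norm_sub_le_norm_sub_add_norm_sub _ _ _
    _ ≤ η / ν + (CE / ν) * ‖ι ψ‖ := by rw [div_mul_eq_mul_div]; linarith

/-- A posteriori error bound based on the nonlinear elliptic reconstruction:
the total error is controlled by the discretization estimator `η/ν` and the
linearization term `(C_E/ν)‖ιψ‖_H`. -/
theorem ilg_aposteriori_nonlinear_reconstruction
    {X : Type*} [NormedAddCommGroup X] [InnerProductSpace ℝ X] [CompleteSpace X]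
    {H : Type*} [NormedAddCommGroup H] [InnerProductSpace ℝ H] [CompleteSpace H]
    (ι : X →L[ℝ] H) (hι : Function.Injective ι)
    (CE : ℝ) (hCE : ∀ v : X, ‖ι v‖ ≤ CE * ‖v‖)
    (XN : Submodule ℝ X)
    (F : X → X →L[ℝ] ℝ) (L ν : ℝ) (hL : 0 < L) (hν : 0 < ν)
    (hlip : ∀ u v w : X, |F u w - F v w| ≤ L * ‖u - v‖ * ‖w‖)
    (hmono : ∀ u v : X, ν * ‖u - v‖ ^ 2 ≤ F u (u - v) - F v (u - v))
    (ustar : X) (hustar : ∀ v : X, F ustar v = 0)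
    (u ψ : X) (hu : u ∈ XN) (hψ : ψ ∈ XN)
    (hriesz : ∀ v ∈ XN, (inner ℝ (ι ψ) (ι v) : ℝ) = F u v)
    (utilde : X)
    (hrec : ∀ v : X, F utilde v = (inner ℝ (ι ψ) (ι v) : ℝ))
    (η : ℝ) (hη0 : 0 ≤ η)
    (hres : ∀ w : X, ‖w‖ = 1 → (inner ℝ (ι ψ) (ι w) : ℝ) - F u w ≤ η) :
    ‖ustar - u‖ ≤ η / ν + (CE / ν) * ‖ι ψ‖ :=
  ilg_aposteriori_nonlinear_reconstruction_general ι CE hCE F L ν hν hmono ustar hustar u ψ utilde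
    hrec η hη0 hres
end

section
/- Let X and H be real Hilbert spaces with a continuous linear embedding ι : X → H, let X_N ⊆ X be a closed linear subspace, F : X → X* strongly monotone with constant ν > 0, and u* ∈ X with ⟨F(u*), v⟩ = 0 for all v ∈ X. Let u ∈ X_N and ψ ∈ X_N satisfy (ιψ, ιv)_H = ⟨F(u), v⟩ for all v ∈ X_N, suppose ũ ∈ X satisfies ⟨F(ũ), v⟩ = (ιψ, ιv)_H for all v ∈ X, and let η ≥ 0 satisfy (ιψ, ιw)_H − ⟨F(u), w⟩ ≤ η for all w ∈ X with ‖w‖_X = 1. Let ξ ∈ X and Ξ ∈ X_N satisfy (ξ, w)_X = (ιψ, ιw)_H for all w ∈ X and (Ξ, w)_X = (ιψ, ιw)_H for all w ∈ X_N. Then ‖u* − u‖_X ≤ η/ν + (1/ν)(‖Ξ‖_X² + ‖ξ − Ξ‖_X²)^{1/2}. -/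
/-!
Split `u* - u = (u* - ũ) + (ũ - u)`. Strong monotonicity turns each difference into a
dual norm: `ν ‖a - b‖ ≤ ‖F a - F b‖`. For `ũ - u` this is the dual norm of the residual
`w ↦ (ιψ, ιw)_H - ⟨F u, w⟩`, at most `η`; for `u* - ũ` it is `‖F ũ‖ = ‖ξ‖`, because `ξ` is
the Riesz representative of `F ũ`. Finally `Ξ` is the orthogonal projection of `ξ` onto
`X_N`, so Pythagoras gives `‖ξ‖² = ‖Ξ‖² + ‖ξ - Ξ‖²`.
-/

open scoped RealInnerProductSpace

lemma le_div_of_mul_sq_le_mul {a c ν : ℝ} (hν : 0 < ν) (ha : 0 ≤ a) (hc : 0 ≤ c)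
    (h : ν * a ^ 2 ≤ c * a) : a ≤ c / ν := by
  rw [le_div_iff₀ hν]
  rcases ha.eq_or_lt with rfl | ha
  · simpa using hc
  · nlinarith

section NormedSpace

variable {X : Type*} [NormedAddCommGroup X] [NormedSpace ℝ X]

lemma norm_sub_le_norm_sub_div_of_strongly_monotone {F : X → X →L[ℝ] ℝ} {ν : ℝ}
    (hν : 0 < ν) (hmono : ∀ u v : X, ν * ‖u - v‖ ^ 2 ≤ F u (u - v) - F v (u - v)) (a b : X) :
    ‖a - b‖ ≤ ‖F a - F b‖ / ν := by
  refine le_div_of_mul_sq_le_mul hν (norm_nonneg _) (norm_nonneg _) ?_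
  calc ν * ‖a - b‖ ^ 2 ≤ (F a - F b) (a - b) := hmono a b
    _ ≤ ‖(F a - F b) (a - b)‖ := Real.le_norm_self _
    _ ≤ ‖F a - F b‖ * ‖a - b‖ := (F a - F b).le_opNorm _

lemma ContinuousLinearMap.opNorm_le_of_apply_le_of_norm_eq_one {ℓ : X →L[ℝ] ℝ} {η : ℝ}
    (hη : 0 ≤ η) (hℓ : ∀ w : X, ‖w‖ = 1 → ℓ w ≤ η) : ‖ℓ‖ ≤ η := by
  refine ℓ.opNorm_le_of_unit_norm hη fun w hw => abs_le.2 ⟨?_, hℓ w hw⟩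
  have := hℓ (-w) (by rwa [norm_neg])
  rw [map_neg] at this
  linarith

end NormedSpace

lemma norm_eq_sqrt_of_inner_sub_eq_zero {E : Type*} [NormedAddCommGroup E]
    [InnerProductSpace ℝ E] {x y : E} (h : ⟪y, x - y⟫ = 0) :
    ‖x‖ = √(‖y‖ ^ 2 + ‖x - y‖ ^ 2) := by
  have := norm_add_sq_eq_norm_sq_add_norm_sq_real h
  rw [add_sub_cancel] at this
  rw [← Real.sqrt_sq (norm_nonneg x), sq, sq, sq, this]

theorem ilg_aposteriori_nonlinear_reconstruction_improved_general
    {X : Type*} [NormedAddCommGroup X] [InnerProductSpace ℝ X]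
    {H : Type*} [NormedAddCommGroup H] [InnerProductSpace ℝ H]
    (ι : X →L[ℝ] H)
    (XN : Submodule ℝ X)
    (F : X → X →L[ℝ] ℝ) (ν : ℝ) (hν : 0 < ν)
    (hmono : ∀ u v : X, ν * ‖u - v‖ ^ 2 ≤ F u (u - v) - F v (u - v))
    (ustar : X) (hustar : ∀ v : X, F ustar v = 0)
    (u ψ : X)
    (utilde : X)
    (hrec : ∀ v : X, F utilde v = (inner ℝ (ι ψ) (ι v) : ℝ))
    (η : ℝ) (hη0 : 0 ≤ η)
    (hres : ∀ w : X, ‖w‖ = 1 → (inner ℝ (ι ψ) (ι w) : ℝ) - F u w ≤ η)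
    (ξ : X) (hξ : ∀ w : X, (inner ℝ ξ w : ℝ) = (inner ℝ (ι ψ) (ι w) : ℝ))
    (Ξ : X) (hΞmem : Ξ ∈ XN)
    (hΞ : ∀ w ∈ XN, (inner ℝ Ξ w : ℝ) = (inner ℝ (ι ψ) (ι w) : ℝ)) :
    ‖ustar - u‖ ≤ η / ν + (1 / ν) * Real.sqrt (‖Ξ‖ ^ 2 + ‖ξ - Ξ‖ ^ 2) := by
  have hF_ustar : F ustar = 0 := ContinuousLinearMap.ext hustar
  have hF_utilde : F utilde = innerSL ℝ ξ :=
    ContinuousLinearMap.ext fun w => (hrec w).trans (hξ w).symm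
  have hresidual : ‖F utilde - F u‖ ≤ η :=
    ContinuousLinearMap.opNorm_le_of_apply_le_of_norm_eq_one hη0 fun w hw => by
      simpa [hrec] using hres w hw
  have hreconstruction : ‖utilde - u‖ ≤ η / ν :=
    (norm_sub_le_norm_sub_div_of_strongly_monotone hν hmono utilde u).trans
      (div_le_div_of_nonneg_right hresidual hν.le)
  have hlinearization : ‖ustar - utilde‖ ≤ ‖ξ‖ / ν := by
    simpa [hF_ustar, hF_utilde] using
      norm_sub_le_norm_sub_div_of_strongly_monotone hν hmono ustar utilde
  have hpythagoras : ‖ξ‖ = √(‖Ξ‖ ^ 2 + ‖ξ - Ξ‖ ^ 2) :=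
    norm_eq_sqrt_of_inner_sub_eq_zero (by
      rw [inner_sub_right, real_inner_comm, hξ, hΞ Ξ hΞmem, sub_self])
  calc ‖ustar - u‖ ≤ ‖ustar - utilde‖ + ‖utilde - u‖ := norm_sub_le_norm_sub_add_norm_sub _ _ _
    _ ≤ ‖ξ‖ / ν + η / ν := add_le_add hlinearization hreconstruction
    _ = η / ν + (1 / ν) * √(‖Ξ‖ ^ 2 + ‖ξ - Ξ‖ ^ 2) := by rw [← hpythagoras]; ring

/-- Improved a posteriori error bound based on the nonlinear elliptic
reconstruction, with the linearization error expressed through the Riesz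
representatives `ξ` and `Ξ` of the functional `w ↦ (ιψ, ιw)_H`. -/
theorem ilg_aposteriori_nonlinear_reconstruction_improved
    {X : Type*} [NormedAddCommGroup X] [InnerProductSpace ℝ X] [CompleteSpace X]
    {H : Type*} [NormedAddCommGroup H] [InnerProductSpace ℝ H] [CompleteSpace H]
    (ι : X →L[ℝ] H) (hι : Function.Injective ι)
    (XN : Submodule ℝ X) (hXN : IsClosed (XN : Set X))
    (F : X → X →L[ℝ] ℝ) (ν : ℝ) (hν : 0 < ν)
    (hmono : ∀ u v : X, ν * ‖u - v‖ ^ 2 ≤ F u (u - v) - F v (u - v))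
    (ustar : X) (hustar : ∀ v : X, F ustar v = 0)
    (u ψ : X) (hu : u ∈ XN) (hψ : ψ ∈ XN)
    (hriesz : ∀ v ∈ XN, (inner ℝ (ι ψ) (ι v) : ℝ) = F u v)
    (utilde : X)
    (hrec : ∀ v : X, F utilde v = (inner ℝ (ι ψ) (ι v) : ℝ))
    (η : ℝ) (hη0 : 0 ≤ η)
    (hres : ∀ w : X, ‖w‖ = 1 → (inner ℝ (ι ψ) (ι w) : ℝ) - F u w ≤ η)
    (ξ : X) (hξ : ∀ w : X, (inner ℝ ξ w : ℝ) = (inner ℝ (ι ψ) (ι w) : ℝ))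
    (Ξ : X) (hΞmem : Ξ ∈ XN)
    (hΞ : ∀ w ∈ XN, (inner ℝ Ξ w : ℝ) = (inner ℝ (ι ψ) (ι w) : ℝ)) :
    ‖ustar - u‖ ≤ η / ν + (1 / ν) * Real.sqrt (‖Ξ‖ ^ 2 + ‖ξ - Ξ‖ ^ 2) :=
  ilg_aposteriori_nonlinear_reconstruction_improved_general ι XN F ν hν hmono ustar hustar u ψ
    utilde hrec η hη0 hres ξ hξ Ξ hΞmem hΞ
end

section
/- Let X be a real Hilbert space, X_N ⊆ X a linear subspace, and F : X → X* strongly monotone with constant ν > 0. For each u ∈ X let a(u;·,·) be a bilinear form on X with a(u;v,w) ≤ β‖v‖_X‖w‖_X for all v, w ∈ X (β > 0 independent of u), and set ⟨f(u),w⟩ = a(u;u,w) − ⟨F(u),w⟩. Suppose û_N ∈ X_N is a discrete Galerkin solution, i.e. ⟨F(û_N), v⟩ = 0 for all v ∈ X_N, and suppose u_N^{n−1}, u_N^{n} ∈ X_N satisfy a(u_N^{n−1}; u_N^{n}, v) = ⟨f(u_N^{n−1}), v⟩ for all v ∈ X_N. Then ‖û_N − u_N^{n}‖_X ≤ (β/ν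 + 1)‖u_N^{n} − u_N^{n−1}‖_X. -/
/-- The distance between the discrete Galerkin solution `û_N` of the nonlinear
problem and an ILG iterate is controlled by the difference of two consecutive
iterates. -/
theorem discrete_solution_iterate_estimate
    {X : Type*} [NormedAddCommGroup X] [InnerProductSpace ℝ X] [CompleteSpace X]
    (XN : Submodule ℝ X)
    (F : X → X →L[ℝ] ℝ) (ν : ℝ) (hν : 0 < ν)
    (hmono : ∀ u v : X, ν * ‖u - v‖ ^ 2 ≤ F u (u - v) - F v (u - v))
    (a : X → X →ₗ[ℝ] X →ₗ[ℝ] ℝ)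
    (β : ℝ) (hβ : 0 < β)
    (hbdd : ∀ u v w : X, a u v w ≤ β * ‖v‖ * ‖w‖)
    (uhat : X) (huhat : uhat ∈ XN)
    (hGal : ∀ v ∈ XN, F uhat v = 0)
    (un un' : X) (hun : un ∈ XN) (hun' : un' ∈ XN)
    (hiter : ∀ v ∈ XN, a un un' v = a un un v - F un v) :
    ‖uhat - un'‖ ≤ (β / ν + 1) * ‖un' - un‖ := by
  set d := uhat - un with hd
  have hdXN : d ∈ XN := XN.sub_mem huhat hun
  have hFun : F un d = a un (un - un') d := by
    have h := hiter d hdXN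
    have h2 : a un (un - un') d = a un un d - a un un' d := by
      rw [map_sub (a un) un un', LinearMap.sub_apply]
    linarith
  have hkey : ν * ‖d‖ ^ 2 ≤ β * ‖un' - un‖ * ‖d‖ := by
    have h1 := hmono uhat un
    rw [← hd, hGal d hdXN] at h1
    have h2 : -(F un d) = a un (un' - un) d := by
      rw [hFun]
      have : un' - un = -(un - un') := by abel
      rw [this, map_neg, LinearMap.neg_apply]
    have h3 := hbdd un (un' - un) d
    linarith
  have hdle : ‖d‖ ≤ β / ν * ‖un' - un‖ := by
    rcases eq_or_lt_of_le (norm_nonneg d) with h | h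
    · rw [← h]
      positivity
    · have : ν * ‖d‖ ≤ β * ‖un' - un‖ := by
        have := hkey
        nlinarith
      rw [div_mul_eq_mul_div, le_div_iff₀ hν]
      linarith
  have htri : ‖uhat - un'‖ ≤ ‖d‖ + ‖un' - un‖ := by
    have : uhat - un' = d - (un' - un) := by rw [hd]; abel
    rw [this]
    exact norm_sub_le _ _
  have : (β / ν + 1) * ‖un' - un‖ = β / ν * ‖un' - un‖ + ‖un' - un‖ := by ring
  linarith
end

section
/- Let X be a real Hilbert space, F : X → X* strongly monotone with constant ν > 0, and u* ∈ X with ⟨F(u*), v⟩ = 0 for all v ∈ X. For each u ∈ X let a(u;·,·) be a bilinear form on X with a(u;v,w) ≤ β‖v‖_X‖w‖_X for all v, w ∈ X (β > 0 independent of u), and set ⟨f(u),w⟩ = a(u;u,w) − ⟨F(u),w⟩. For each N ∈ ℕ let X_N ⊆ X be a linear subspace, let û_N ∈ X_N satisfy ⟨F(û_N), v⟩ = 0 for all v ∈ X_N with ‖u* − û_N‖_X → 0 as N → ∞, and let u_N', u_N ∈ X_N satisfy a(u_N'; u_N, v) = ⟨f(u_N'), v⟩ for all v ∈ X_N together with the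 stopping criterion ‖u_N − u_N'‖_X ≤ σ(N), where σ : ℕ → (0,∞) satisfies σ(N) → 0 as N → ∞. Then ‖u* − u_N‖_X → 0 as N → ∞. -/
/-- Convergence of the adaptive ILG algorithm: if the discrete Galerkin
solutions converge to the exact solution and the stopping criterion tolerance
`σ(N)` tends to zero, then the final ILG iterates converge to the exact
solution. -/
theorem adaptive_ilg_convergence
    {X : Type*} [NormedAddCommGroup X] [InnerProductSpace ℝ X] [CompleteSpace X]
    (F : X → X →L[ℝ] ℝ) (ν : ℝ) (hν : 0 < ν)
    (hmono : ∀ u v : X, ν * ‖u - v‖ ^ 2 ≤ F u (u - v) - F v (u - v))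
    (ustar : X) (hustar : ∀ v : X, F ustar v = 0)
    (a : X → X →ₗ[ℝ] X →ₗ[ℝ] ℝ)
    (β : ℝ) (hβ : 0 < β)
    (hbdd : ∀ u v w : X, a u v w ≤ β * ‖v‖ * ‖w‖)
    (XN : ℕ → Submodule ℝ X)
    (uhat : ℕ → X) (huhatmem : ∀ N : ℕ, uhat N ∈ XN N)
    (hGal : ∀ N : ℕ, ∀ v ∈ XN N, F (uhat N) v = 0)
    (hAG : Filter.Tendsto (fun N => ‖ustar - uhat N‖) Filter.atTop (nhds 0))
    (u' u : ℕ → X) (hu'mem : ∀ N : ℕ, u' N ∈ XN N) (humem : ∀ N : ℕ, u N ∈ XN N)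
    (hiter : ∀ N : ℕ, ∀ v ∈ XN N, a (u' N) (u N) v = a (u' N) (u' N) v - F (u' N) v)
    (σ : ℕ → ℝ) (hσpos : ∀ N : ℕ, 0 < σ N)
    (hσ0 : Filter.Tendsto σ Filter.atTop (nhds 0))
    (hstop : ∀ N : ℕ, ‖u N - u' N‖ ≤ σ N) :
    Filter.Tendsto (fun N => ‖ustar - u N‖) Filter.atTop (nhds 0) := by

  -- Key bound: ‖u' N - uhat N‖ ≤ (β/ν) * σ N
  have key : ∀ N : ℕ, ‖u' N - uhat N‖ ≤ (β / ν) * σ N := by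
    intro N
    set d := u' N - uhat N with hd
    have hdmem : d ∈ XN N := Submodule.sub_mem _ (hu'mem N) (huhatmem N)
    have h1 : ν * ‖d‖ ^ 2 ≤ F (u' N) d := by
      have := hmono (u' N) (uhat N)
      have h2 := hGal N d hdmem
      rw [← hd] at this
      linarith
    have h3 : F (u' N) d = a (u' N) (u' N - u N) d := by
      have h4 := hiter N d hdmem
      have : a (u' N) (u' N - u N) d = a (u' N) (u' N) d - a (u' N) (u N) d := by
        simp [map_sub]
      linarith
    have h5 : a (u' N) (u' N - u N) d ≤ β * ‖u' N - u N‖ * ‖d‖ := hbdd _ _ _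
    have h6 : ‖u' N - u N‖ ≤ σ N := by
      rw [norm_sub_rev]; exact hstop N
    have h7 : ν * ‖d‖ ^ 2 ≤ β * σ N * ‖d‖ := by
      calc ν * ‖d‖ ^ 2 ≤ β * ‖u' N - u N‖ * ‖d‖ := by rw [h3] at h1; linarith
        _ ≤ β * σ N * ‖d‖ := by
            gcongr
    rcases eq_or_lt_of_le (norm_nonneg d) with h | h
    · rw [← h]
      exact mul_nonneg (div_nonneg hβ.le hν.le) (hσpos N).le
    · rw [div_mul_eq_mul_div, le_div_iff₀ hν]
      nlinarith
  have bound : ∀ N : ℕ, ‖ustar - u N‖ ≤ ‖ustar - uhat N‖ + (β / ν + 1) * σ N := by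
    intro N
    have t1 := norm_sub_le_norm_sub_add_norm_sub ustar (uhat N) (u N)
    have t2 := norm_sub_le_norm_sub_add_norm_sub (uhat N) (u' N) (u N)
    calc ‖ustar - u N‖ ≤ ‖ustar - uhat N‖ + ‖uhat N - u' N‖ + ‖u' N - u N‖ := by
          linarith
      _ ≤ ‖ustar - uhat N‖ + (β / ν) * σ N + σ N := by
          have h1 : ‖uhat N - u' N‖ ≤ (β / ν) * σ N := by
            rw [norm_sub_rev]; exact key N
          have h2 : ‖u' N - u N‖ ≤ σ N := by rw [norm_sub_rev]; exact hstop N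
          linarith
      _ = ‖ustar - uhat N‖ + (β / ν + 1) * σ N := by ring
  have hlim : Filter.Tendsto (fun N => ‖ustar - uhat N‖ + (β / ν + 1) * σ N)
      Filter.atTop (nhds 0) := by
    have := hAG.add (hσ0.const_mul (β / ν + 1))
    simpa using this
  refine tendsto_of_tendsto_of_tendsto_of_le_of_le tendsto_const_nhds hlim
    (fun N => norm_nonneg _) bound
end
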